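/- arXiv:2603.04940 — 9 statements merged into one kernel-verified Lean document; each statement's English description precedes it below -/
import Mathlib

section
/- Under the stated assumptions, the maximizer map is locally Lipschitz: for any x, x' ∈ ℝⁿ with ‖x − x'‖ ≤ 1/L_{x,1}, one has ‖y*(x) − y*(x')‖ ≤ κ‖x − x'‖, where κ := (L_{y,0} + L_{y,1}B)/μ. -/
open scoped RealInnerProductSpace

open Set Filter Topology InnerProductSpace

section Aux

variable {F : Type*} [NormedAddCommGroup F] [InnerProductSpace ℝ F] [CompleteSpace F]

/-- First-order inequality for a strongly concave function. -/
lemma strongConcaveOn_first_order {f : F → ℝ} {μ : ℝ}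
    (hf : StrongConcaveOn Set.univ μ f) (u v gu : F)
    (hgu : HasGradientAt f gu u) :
    f v + μ/2 * ‖u - v‖^2 ≤ f u + ⟪gu, v - u⟫ := by
  set ψ : ℝ → ℝ := fun t => f (u + t • (v - u)) with hψdef
  have hψ : HasDerivAt ψ ⟪gu, v - u⟫ 0 := by
    have hline : HasDerivAt (fun t : ℝ => u + t • (v - u)) (v - u) 0 := by
      simpa using ((hasDerivAt_id (0:ℝ)).smul_const (v - u)).const_add u
    have hF := hasGradientAt_iff_hasFDerivAt.mp hgu
    have hF' : HasFDerivAt f (toDual ℝ F gu) (u + (0:ℝ) • (v - u)) := by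
      simpa using hF
    have := hF'.comp_hasDerivAt (0:ℝ) hline
    simp only [toDual_apply_apply] at this
    exact this
  have hslope : Tendsto (slope ψ 0) (𝓝[>] (0:ℝ)) (𝓝 ⟪gu, v - u⟫) :=
    (hasDerivAt_iff_tendsto_slope.mp hψ).mono_left
      (nhdsWithin_mono _ (fun t ht => Set.mem_compl_singleton_iff.mpr (ne_of_gt ht)))
  have hC : Tendsto (fun t : ℝ => f v - f u + (1 - t) * (μ/2 * ‖u - v‖^2)) (𝓝[>] (0:ℝ))
      (𝓝 (f v - f u + μ/2 * ‖u - v‖^2)) := by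
    have hc : ContinuousAt (fun t : ℝ => f v - f u + (1 - t) * (μ/2 * ‖u - v‖^2)) 0 := by
      fun_prop
    have := hc.tendsto.mono_left (nhdsWithin_le_nhds (s := Set.Ioi (0:ℝ)))
    simpa using this
  have hev : ∀ᶠ t in 𝓝[>] (0:ℝ),
      f v - f u + (1 - t) * (μ/2 * ‖u - v‖^2) ≤ slope ψ 0 t := by
    filter_upwards [Ioc_mem_nhdsGT (one_pos)] with t ht
    have key := hf.2 (Set.mem_univ u) (Set.mem_univ v)
      (by linarith [ht.2] : (0:ℝ) ≤ 1 - t) (le_of_lt ht.1) (by ring)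
    have heq : (1 - t) • u + t • v = u + t • (v - u) := by module
    rw [heq] at key
    have hψt : (1 - t) * f u + t * f v + (1 - t) * t * (μ/2 * ‖u - v‖^2) ≤ ψ t := by
      simpa [hψdef, smul_eq_mul] using key
    have hψ0 : ψ 0 = f u := by simp [hψdef]
    rw [slope_def_field, hψ0, sub_zero]
    rw [le_div_iff₀ ht.1]
    ring_nf
    nlinarith [hψt]
  have hfin := le_of_tendsto_of_tendsto hC hslope hev
  linarith [hfin]

/-- First-order optimality condition on a convex set. -/
lemma maximizer_grad_nonpos {f : F → ℝ} {Y : Set F} (hYc : Convex ℝ Y) {a y gu : F}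
    (ha : a ∈ Y) (hy : y ∈ Y) (hmax : ∀ z ∈ Y, f z ≤ f a)
    (hg : HasGradientAt f gu a) : ⟪gu, y - a⟫ ≤ 0 := by
  have hloc : IsLocalMaxOn f Y a :=
    eventually_nhdsWithin_of_forall hmax
  have htan : y - a ∈ posTangentConeAt Y a :=
    sub_mem_posTangentConeAt_of_segment_subset (hYc.segment_subset ha hy)
  have hF : HasFDerivWithinAt f (toDual ℝ F gu) Y a :=
    (hasGradientAt_iff_hasFDerivAt.mp hg).hasFDerivWithinAt
  have := hloc.hasFDerivWithinAt_nonpos hF htan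
  simpa [toDual_apply_apply] using this

end Aux

/-- Lemma 3.1: local Lipschitz continuity of the maximizer map `y*`. -/
theorem maximizer_locally_lipschitz
    {n m : ℕ} (hn : 0 < n) (hm : 0 < m)
    (L : EuclideanSpace ℝ (Fin n) → EuclideanSpace ℝ (Fin m) → ℝ)
    (hLdiff : Differentiable ℝ
      (fun p : (EuclideanSpace ℝ (Fin n)) × (EuclideanSpace ℝ (Fin m)) => L p.1 p.2))
    (gx : EuclideanSpace ℝ (Fin n) → EuclideanSpace ℝ (Fin m) → EuclideanSpace ℝ (Fin n))
    (gy : EuclideanSpace ℝ (Fin n) → EuclideanSpace ℝ (Fin m) → EuclideanSpace ℝ (Fin m))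
    (hgx : ∀ x y, HasGradientAt (fun x' => L x' y) (gx x y) x)
    (hgy : ∀ x y, HasGradientAt (fun y' => L x y') (gy x y) y)
    (μ : ℝ) (hμ : 0 < μ)
    (Y : Set (EuclideanSpace ℝ (Fin m)))
    (hY : Y = Set.univ ∨ (Y.Nonempty ∧ IsCompact Y ∧ Convex ℝ Y))
    (hconc : ∀ x, StrongConcaveOn Set.univ μ (L x))
    (Lx0 Lx1 Ly0 Ly1 : ℝ)
    (hLx0 : 0 ≤ Lx0) (hLx1 : 0 ≤ Lx1) (hLy0 : 0 ≤ Ly0) (hLy1 : 0 ≤ Ly1)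
    (hsx : ∀ x y x' y', Real.sqrt (‖x - x'‖^2 + ‖y - y'‖^2) ≤ 1/Lx1 + 1/Ly1 →
      ‖gx x y - gx x' y'‖ ≤ (Lx0 + Lx1 * ‖gx x y‖) * Real.sqrt (‖x - x'‖^2 + ‖y - y'‖^2))
    (hsy : ∀ x y x' y', Real.sqrt (‖x - x'‖^2 + ‖y - y'‖^2) ≤ 1/Lx1 + 1/Ly1 →
      ‖gy x y - gy x' y'‖ ≤ (Ly0 + Ly1 * ‖gy x y‖) * Real.sqrt (‖x - x'‖^2 + ‖y - y'‖^2))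
    (ystar : EuclideanSpace ℝ (Fin n) → EuclideanSpace ℝ (Fin m))
    (hmem : ∀ x, ystar x ∈ Y)
    (hmax : ∀ x, ∀ y ∈ Y, L x y ≤ L x (ystar x))
    (huniq : ∀ x, ∀ y ∈ Y, (∀ z ∈ Y, L x z ≤ L x y) → y = ystar x)
    (B : ℝ) (hB : 0 ≤ B)
    (hgradB : ∀ x, ‖gy x (ystar x)‖ ≤ B) :
    ∀ x x' : EuclideanSpace ℝ (Fin n), ‖x - x'‖ ≤ 1/Lx1 →
      ‖ystar x - ystar x'‖ ≤ ((Ly0 + Ly1 * B)/μ) * ‖x - x'‖ := by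
  intro x x' hxx'
  set a := ystar x with ha
  set b := ystar x' with hb
  have hYconv : Convex ℝ Y := by
    rcases hY with h | h
    · rw [h]; exact convex_univ
    · exact h.2.2
  set K := Ly0 + Ly1 * B with hK
  have hK0 : 0 ≤ K := by positivity
  -- smoothness step : ‖gy x' b - gy x b‖ ≤ K * ‖x - x'‖
  have hsmooth : ‖gy x' b - gy x b‖ ≤ K * ‖x - x'‖ := by
    have hdist : Real.sqrt (‖x' - x‖^2 + ‖b - b‖^2) = ‖x - x'‖ := by
      rw [sub_self, norm_zero]
      simp [Real.sqrt_sq (norm_nonneg _), norm_sub_rev]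
    have hle : Real.sqrt (‖x' - x‖^2 + ‖b - b‖^2) ≤ 1/Lx1 + 1/Ly1 := by
      rw [hdist]
      have : (0:ℝ) ≤ 1/Ly1 := by positivity
      linarith
    have := hsy x' b x b hle
    rw [hdist] at this
    refine this.trans ?_
    have hgB : ‖gy x' b‖ ≤ B := hgradB x'
    have : Ly0 + Ly1 * ‖gy x' b‖ ≤ K := by
      rw [hK]
      nlinarith
    exact mul_le_mul_of_nonneg_right this (norm_nonneg _)
  -- strong concavity step
  have hc1 := strongConcaveOn_first_order (hconc x) a b (gy x a) (hgy x a)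
  have hc2 := strongConcaveOn_first_order (hconc x) b a (gy x b) (hgy x b)
  have hnormsym : ‖b - a‖ = ‖a - b‖ := norm_sub_rev _ _
  have hmono : μ * ‖a - b‖^2 ≤ ⟪gy x a, b - a⟫ + ⟪gy x b, a - b⟫ := by
    rw [hnormsym] at hc2
    linarith
  -- optimality step
  have hopt1 : ⟪gy x a, b - a⟫ ≤ 0 :=
    maximizer_grad_nonpos hYconv (hmem x) (hmem x') (hmax x) (hgy x a)
  have hopt2 : ⟪gy x' b, a - b⟫ ≤ 0 :=
    maximizer_grad_nonpos hYconv (hmem x') (hmem x) (hmax x') (hgy x' b)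
  have hinner : ⟪gy x b, a - b⟫ ≤ K * ‖x - x'‖ * ‖a - b‖ := by
    have hsplit : ⟪gy x b, a - b⟫ = ⟪gy x' b, a - b⟫ + ⟪gy x b - gy x' b, a - b⟫ := by
      rw [← inner_add_left]
      congr 1
      abel
    have hcs : ⟪gy x b - gy x' b, a - b⟫ ≤ ‖gy x b - gy x' b‖ * ‖a - b‖ :=
      real_inner_le_norm _ _
    have hrev : ‖gy x b - gy x' b‖ = ‖gy x' b - gy x b‖ := norm_sub_rev _ _
    calc ⟪gy x b, a - b⟫ = ⟪gy x' b, a - b⟫ + ⟪gy x b - gy x' b, a - b⟫ := hsplit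
      _ ≤ 0 + ‖gy x b - gy x' b‖ * ‖a - b‖ := add_le_add hopt2 hcs
      _ = ‖gy x' b - gy x b‖ * ‖a - b‖ := by rw [hrev]; ring
      _ ≤ K * ‖x - x'‖ * ‖a - b‖ :=
        mul_le_mul_of_nonneg_right hsmooth (norm_nonneg _)
  have hmain : μ * ‖a - b‖^2 ≤ K * ‖x - x'‖ * ‖a - b‖ := by
    calc μ * ‖a - b‖^2 ≤ ⟪gy x a, b - a⟫ + ⟪gy x b, a - b⟫ := hmono
      _ ≤ 0 + K * ‖x - x'‖ * ‖a - b‖ := add_le_add hopt1 hinner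
      _ = K * ‖x - x'‖ * ‖a - b‖ := by ring
  have hfinal : μ * ‖a - b‖ ≤ K * ‖x - x'‖ := by
    rcases eq_or_lt_of_le (norm_nonneg (a - b)) with h0 | h0
    · rw [← h0]
      have : (0:ℝ) ≤ K * ‖x - x'‖ := mul_nonneg hK0 (norm_nonneg _)
      linarith
    · have := hmain
      rw [sq] at this
      nlinarith
  rw [div_mul_eq_mul_div, le_div_iff₀ hμ]
  linarith
end

section
/- The primal function Φ is generalized-smooth with constants inflated by (1+κ): for any x, x' ∈ ℝⁿ with ‖x − x'‖ ≤ 1/((1+κ)L_{x,1}), one has ‖∇Φ(x) − ∇Φ(x')‖ ≤ (1 + κ)(L_{x,0} + L_{x,1}‖∇Φ(x)‖)‖x − x'‖, where κ := (L_{y,0} + L_{y,1}B)/μ and ∇Φ(x) = ∇_x L(x, y*(x)). -/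
open scoped RealInnerProductSpace


section Aux

variable {E : Type*} [NormedAddCommGroup E] [InnerProductSpace ℝ E] [CompleteSpace E]

lemma myHasGradientAt_neg {f : E → ℝ} {g a : E} (h : HasGradientAt f g a) :
    HasGradientAt (fun y => -(f y)) (-g) a := by
  rw [hasGradientAt_iff_hasFDerivAt] at *
  rw [map_neg]
  exact h.neg

lemma myHasGradientAt_add {f q : E → ℝ} {g h a : E}
    (hf : HasGradientAt f g a) (hq : HasGradientAt q h a) :
    HasGradientAt (fun y => f y + q y) (g + h) a := by
  rw [hasGradientAt_iff_hasFDerivAt] at *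
  rw [map_add]
  exact hf.add hq

lemma hasGradientAt_half_mul_norm_sq (μ : ℝ) (y : E) :
    HasGradientAt (fun z : E => μ / 2 * ‖z‖ ^ 2) (μ • y) y := by
  rw [hasGradientAt_iff_hasFDerivAt]
  have h1 : HasFDerivAt (fun z : E => ‖z‖ ^ 2) (2 • (innerSL ℝ y)) y := by
    simpa using (hasFDerivAt_id y).norm_sq
  have h2 := h1.const_mul (μ / 2)
  refine h2.congr_fderiv ?_
  ext v
  simp [real_inner_smul_left]
  ring

/-- Linearization lower bound for convex functions with a gradient. -/
lemma convexOn_inner_grad_le {f : E → ℝ} (hf : ConvexOn ℝ Set.univ f)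
    {a g : E} (hg : HasGradientAt f g a) (b : E) :
    ⟪g, b - a⟫ ≤ f b - f a := by
  rcases eq_or_ne b a with rfl | hne
  · simp
  · have hψ : ConvexOn ℝ Set.univ (fun t : ℝ => f (t • (b - a) + a)) := by
      have h := hf.comp_affineMap (AffineMap.lineMap a b : ℝ →ᵃ[ℝ] E)
      have he : (fun t : ℝ => f (t • (b - a) + a))
          = (f ∘ (AffineMap.lineMap a b : ℝ →ᵃ[ℝ] E)) := by
        funext t
        simp only [Function.comp_apply, AffineMap.lineMap_apply_module]
        congr 1
        module
      rw [he]
      simpa only [Set.preimage_univ] using h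
    have hc : HasDerivAt (fun t : ℝ => t • (b - a) + a) (b - a) (0 : ℝ) := by
      simpa using ((hasDerivAt_id (0 : ℝ)).smul_const (b - a)).add_const a
    have hfa : HasFDerivAt f (InnerProductSpace.toDual ℝ E g)
        ((fun t : ℝ => t • (b - a) + a) 0) := by
      simpa using hg.hasFDerivAt
    have hd : HasDerivAt (fun t : ℝ => f (t • (b - a) + a)) ⟪g, b - a⟫ (0 : ℝ) := by
      have := hfa.comp_hasDerivAt (0 : ℝ) hc
      simpa [Function.comp_def] using this
    have := hψ.le_slope_of_hasDerivAt (Set.mem_univ (0 : ℝ)) (Set.mem_univ (1 : ℝ))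
      one_pos hd
    simpa [slope_def_field] using this

/-- Linearization upper bound for concave functions with a gradient. -/
lemma concaveOn_le_inner_grad {f : E → ℝ} (hf : ConcaveOn ℝ Set.univ f)
    {a g : E} (hg : HasGradientAt f g a) (b : E) :
    f b - f a ≤ ⟪g, b - a⟫ := by
  have := convexOn_inner_grad_le hf.neg (myHasGradientAt_neg hg) b
  simp only [Pi.neg_apply, inner_neg_left] at this
  linarith

/-- Strong monotonicity (reversed) of the gradient of a strongly concave function. -/
lemma strongConcave_grad_mono {f : E → ℝ} {μ : ℝ}
    (hf : StrongConcaveOn Set.univ μ f) {a b ga gb : E}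
    (hga : HasGradientAt f ga a) (hgb : HasGradientAt f gb b) :
    ⟪ga - gb, a - b⟫ ≤ -(μ * ‖a - b‖ ^ 2) := by
  have hk : ConcaveOn ℝ Set.univ (fun y => f y + μ / 2 * ‖y‖ ^ 2) :=
    strongConcaveOn_iff_convex.mp hf
  have hka : HasGradientAt (fun y => f y + μ / 2 * ‖y‖ ^ 2) (ga + μ • a) a :=
    myHasGradientAt_add hga (hasGradientAt_half_mul_norm_sq μ a)
  have hkb : HasGradientAt (fun y => f y + μ / 2 * ‖y‖ ^ 2) (gb + μ • b) b :=
    myHasGradientAt_add hgb (hasGradientAt_half_mul_norm_sq μ b)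
  have h1 := concaveOn_le_inner_grad hk hka b
  have h2 := concaveOn_le_inner_grad hk hkb a
  have hsum : (0 : ℝ) ≤ ⟪ga + μ • a, b - a⟫ + ⟪gb + μ • b, a - b⟫ := by linarith
  have hexp : ⟪ga + μ • a, b - a⟫ + ⟪gb + μ • b, a - b⟫
      = -⟪ga - gb, a - b⟫ - μ * ‖a - b‖ ^ 2 := by
    simp only [inner_add_left, inner_sub_left, inner_sub_right, real_inner_smul_left,
      ← real_inner_self_eq_norm_sq]
    rw [real_inner_comm b a]
    ring
  linarith [hsum, hexp]

end Aux

lemma sqrt_sq_add_sq_le (a b : ℝ) (ha : 0 ≤ a) (hb : 0 ≤ b) :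
    Real.sqrt (a ^ 2 + b ^ 2) ≤ a + b := by
  have h7 : a ^ 2 + b ^ 2 ≤ (a + b) ^ 2 := by nlinarith [mul_nonneg ha hb]
  have h8 := Real.sqrt_le_sqrt h7
  rwa [Real.sqrt_sq (by linarith)] at h8

lemma variational_ineq {E : Type*} [NormedAddCommGroup E] [InnerProductSpace ℝ E]
    [CompleteSpace E] {f : E → ℝ} {Y : Set E} (hconv : Convex ℝ Y) {a g : E}
    (ha : a ∈ Y) (hmax : ∀ y ∈ Y, f y ≤ f a) (hg : HasGradientAt f g a)
    {b : E} (hb : b ∈ Y) : ⟪g, b - a⟫ ≤ 0 := by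
  have hmaxOn : IsMaxOn f Y a := isMaxOn_iff.mpr hmax
  have hloc : IsLocalMaxOn f Y a :=
    hmaxOn.filter_mono (Filter.le_principal_iff.mpr self_mem_nhdsWithin)
  have hcone : b - a ∈ posTangentConeAt Y a :=
    sub_mem_posTangentConeAt_of_segment_subset (hconv.segment_subset ha hb)
  have := hloc.hasFDerivWithinAt_nonpos hg.hasFDerivAt.hasFDerivWithinAt hcone
  simpa using this

set_option maxHeartbeats 1000000 in
/-- Lemma 3.2(a): generalized smoothness of the primal function `Φ(x) = L(x, y*(x))`,
whose gradient is `∇Φ(x) = ∇ₓL(x, y*(x))`. -/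
theorem primal_generalized_smooth
    {n m : ℕ} (hn : 0 < n) (hm : 0 < m)
    (L : EuclideanSpace ℝ (Fin n) → EuclideanSpace ℝ (Fin m) → ℝ)
    (hLdiff : Differentiable ℝ
      (fun p : (EuclideanSpace ℝ (Fin n)) × (EuclideanSpace ℝ (Fin m)) => L p.1 p.2))
    (gx : EuclideanSpace ℝ (Fin n) → EuclideanSpace ℝ (Fin m) → EuclideanSpace ℝ (Fin n))
    (gy : EuclideanSpace ℝ (Fin n) → EuclideanSpace ℝ (Fin m) → EuclideanSpace ℝ (Fin m))
    (hgx : ∀ x y, HasGradientAt (fun x' => L x' y) (gx x y) x)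
    (hgy : ∀ x y, HasGradientAt (fun y' => L x y') (gy x y) y)
    (μ : ℝ) (hμ : 0 < μ)
    (Y : Set (EuclideanSpace ℝ (Fin m)))
    (hY : Y = Set.univ ∨ (Y.Nonempty ∧ IsCompact Y ∧ Convex ℝ Y))
    (hconc : ∀ x, StrongConcaveOn Set.univ μ (L x))
    (Lx0 Lx1 Ly0 Ly1 : ℝ)
    (hLx0 : 0 ≤ Lx0) (hLx1 : 0 ≤ Lx1) (hLy0 : 0 ≤ Ly0) (hLy1 : 0 ≤ Ly1)
    (hsx : ∀ x y x' y', Real.sqrt (‖x - x'‖^2 + ‖y - y'‖^2) ≤ 1/Lx1 + 1/Ly1 →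
      ‖gx x y - gx x' y'‖ ≤ (Lx0 + Lx1 * ‖gx x y‖) * Real.sqrt (‖x - x'‖^2 + ‖y - y'‖^2))
    (hsy : ∀ x y x' y', Real.sqrt (‖x - x'‖^2 + ‖y - y'‖^2) ≤ 1/Lx1 + 1/Ly1 →
      ‖gy x y - gy x' y'‖ ≤ (Ly0 + Ly1 * ‖gy x y‖) * Real.sqrt (‖x - x'‖^2 + ‖y - y'‖^2))
    (ystar : EuclideanSpace ℝ (Fin n) → EuclideanSpace ℝ (Fin m))
    (hmem : ∀ x, ystar x ∈ Y)
    (hmax : ∀ x, ∀ y ∈ Y, L x y ≤ L x (ystar x))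
    (huniq : ∀ x, ∀ y ∈ Y, (∀ z ∈ Y, L x z ≤ L x y) → y = ystar x)
    (B : ℝ) (hB : 0 ≤ B)
    (hgradB : ∀ x, ‖gy x (ystar x)‖ ≤ B)
    (hDanskin : ∀ x, HasGradientAt (fun x' => L x' (ystar x')) (gx x (ystar x)) x)
    (κ : ℝ) (hκ : κ = (Ly0 + Ly1 * B)/μ)
    :
    ∀ x x' : EuclideanSpace ℝ (Fin n), ‖x - x'‖ ≤ 1/((1 + κ) * Lx1) →
      ‖gx x (ystar x) - gx x' (ystar x')‖ ≤
        (1 + κ) * (Lx0 + Lx1 * ‖gx x (ystar x)‖) * ‖x - x'‖ := by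
  intro x x' hxx'
  have hκ0 : 0 ≤ κ := by
    rw [hκ]
    exact div_nonneg (add_nonneg hLy0 (mul_nonneg hLy1 hB)) hμ.le
  have h1κ : (0:ℝ) < 1 + κ := by linarith
  by_cases hxe : x = x'
  · subst hxe; simp
  · have hxpos : 0 < ‖x - x'‖ := by
      rw [norm_pos_iff]; exact sub_ne_zero.mpr hxe
    have hLx1pos : 0 < Lx1 := by
      rcases lt_or_eq_of_le hLx1 with h | h
      · exact h
      · exfalso; rw [← h, mul_zero, div_zero] at hxx'; linarith
    have hYconv : Convex ℝ Y := by
      rcases hY with h | h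
      · rw [h]; exact convex_univ
      · exact h.2.2
    set y1 := ystar x with hy1
    set y2 := ystar x' with hy2
    have hVI1 : ⟪gy x y1, y2 - y1⟫ ≤ 0 :=
      variational_ineq hYconv (hmem x) (hmax x) (hgy x y1) (hmem x')
    have hVI2 : ⟪gy x' y2, y1 - y2⟫ ≤ 0 :=
      variational_ineq hYconv (hmem x') (hmax x') (hgy x' y2) (hmem x)
    have hSM := strongConcave_grad_mono (hconc x) (hgy x y1) (hgy x y2)
    have hxle : ‖x - x'‖ ≤ 1 / Lx1 := by
      refine hxx'.trans (one_div_le_one_div_of_le hLx1pos ?_)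
      nlinarith
    have hLy1inv : (0:ℝ) ≤ 1 / Ly1 := by positivity
    have hs0 : Real.sqrt (‖x' - x‖^2 + ‖y2 - y2‖^2) = ‖x - x'‖ := by
      rw [sub_self, norm_zero]
      norm_num
      exact norm_sub_rev _ _
    have hG := hsy x' y2 x y2 (by rw [hs0]; linarith)
    rw [hs0] at hG
    have hG2 : ‖gy x y2 - gy x' y2‖ ≤ (Ly0 + Ly1 * B) * ‖x - x'‖ := by
      rw [norm_sub_rev]
      refine hG.trans (mul_le_mul_of_nonneg_right ?_ (norm_nonneg _))
      have := hgradB x'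
      nlinarith
    have hip : ⟪gy x y2 - gy x' y2, y1 - y2⟫ ≤ ‖gy x y2 - gy x' y2‖ * ‖y1 - y2‖ :=
      real_inner_le_norm _ _
    have e1 : ⟪gy x y1, y2 - y1⟫ = -⟪gy x y1, y1 - y2⟫ := by
      rw [show y2 - y1 = -(y1 - y2) by abel, inner_neg_right]
    have e2 : ⟪gy x y1 - gy x y2, y1 - y2⟫
        = ⟪gy x y1, y1 - y2⟫ - ⟪gy x y2, y1 - y2⟫ := inner_sub_left _ _ _
    have e3 : ⟪gy x y2 - gy x' y2, y1 - y2⟫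
        = ⟪gy x y2, y1 - y2⟫ - ⟪gy x' y2, y1 - y2⟫ := inner_sub_left _ _ _
    have hchain : μ * ‖y1 - y2‖^2 ≤ ‖gy x y2 - gy x' y2‖ * ‖y1 - y2‖ := by
      linarith
    have hylip : ‖y1 - y2‖ ≤ κ * ‖x - x'‖ := by
      rcases eq_or_lt_of_le (norm_nonneg (y1 - y2)) with h0 | h0
      · rw [← h0]; positivity
      · have h4 : μ * ‖y1 - y2‖^2 ≤ ((Ly0 + Ly1 * B) * ‖x - x'‖) * ‖y1 - y2‖ :=
          hchain.trans (mul_le_mul_of_nonneg_right hG2 (norm_nonneg _))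
        rw [hκ, div_mul_eq_mul_div, le_div_iff₀ hμ]
        nlinarith [h4, h0]
    have hsqrt : Real.sqrt (‖x - x'‖^2 + ‖y1 - y2‖^2) ≤ ‖x - x'‖ + ‖y1 - y2‖ :=
      sqrt_sq_add_sq_le _ _ (norm_nonneg _) (norm_nonneg _)
    have hd1 : Real.sqrt (‖x - x'‖^2 + ‖y1 - y2‖^2) ≤ (1 + κ) * ‖x - x'‖ := by
      have he4 : ‖x - x'‖ + κ * ‖x - x'‖ = (1 + κ) * ‖x - x'‖ := by ring
      linarith
    have hdcond : Real.sqrt (‖x - x'‖^2 + ‖y1 - y2‖^2) ≤ 1/Lx1 + 1/Ly1 := by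
      have h5 : (1 + κ) * ‖x - x'‖ ≤ 1/Lx1 := by
        have h6 := mul_le_mul_of_nonneg_left hxx' h1κ.le
        rwa [show (1+κ) * (1/((1+κ)*Lx1)) = 1/Lx1 from by field_simp] at h6
      linarith
    have hmain := hsx x y1 x' y2 hdcond
    refine hmain.trans ?_
    have hfac : 0 ≤ Lx0 + Lx1 * ‖gx x y1‖ :=
      add_nonneg hLx0 (mul_nonneg hLx1 (norm_nonneg (gx x y1)))
    calc (Lx0 + Lx1 * ‖gx x y1‖) * Real.sqrt (‖x - x'‖^2 + ‖y1 - y2‖^2)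
        ≤ (Lx0 + Lx1 * ‖gx x y1‖) * ((1 + κ) * ‖x - x'‖) :=
          mul_le_mul_of_nonneg_left hd1 hfac
      _ = (1 + κ) * (Lx0 + Lx1 * ‖gx x y1‖) * ‖x - x'‖ := by ring
end

section
/- The primal function Φ satisfies the generalized descent inequality: for any x, x' ∈ ℝⁿ with ‖x − x'‖ ≤ 1/((1+κ)L_{x,1}), one has Φ(x') ≤ Φ(x) + ⟨∇Φ(x), x' − x⟩ + ((1 + κ)/2)(L_{x,0} + L_{x,1}‖∇Φ(x)‖)‖x − x'‖², where κ := (L_{y,0} + L_{y,1}B)/μ. -/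
open scoped RealInnerProductSpace
open InnerProductSpace

section Aux
variable {E : Type*} [NormedAddCommGroup E] [InnerProductSpace ℝ E] [CompleteSpace E]

lemma concave_first_order' {f : E → ℝ} (hf : ConcaveOn ℝ Set.univ f) {a g : E}
    (hg : HasGradientAt f g a) (b : E) : f b ≤ f a + ⟪g, b - a⟫ := by
  set v := b - a with hv
  have hφ : ConcaveOn ℝ Set.univ fun t : ℝ => f (a + t • v) := by
    have h := hf.comp_affineMap (AffineMap.lineMap a b : ℝ →ᵃ[ℝ] E)
    rw [Set.preimage_univ] at h
    have he : (fun t : ℝ => f (a + t • v)) = f ∘ (AffineMap.lineMap a b : ℝ →ᵃ[ℝ] E) := by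
      funext t
      simp [AffineMap.lineMap_apply, hv, add_comm]
    rw [he]; exact h
  have hline : HasDerivAt (fun s : ℝ => a + s • v) v 0 := by
    simpa using ((hasDerivAt_id (0:ℝ)).smul_const v).const_add a
  have hd : HasDerivAt (fun t : ℝ => f (a + t • v)) ⟪g, v⟫ 0 := by
    have h1 := hasGradientAt_iff_hasFDerivAt.mp hg
    have h1' : HasFDerivAt f (toDual ℝ E g) (a + (0:ℝ) • v) := by simpa using h1
    have := h1'.comp_hasDerivAt 0 hline
    simp [toDual_apply_apply] at this
    exact this
  have hs := hφ.slope_le_of_hasDerivAt (Set.mem_univ (0:ℝ)) (Set.mem_univ (1:ℝ)) one_pos hd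
  rw [slope_def_field] at hs
  simp only [one_smul] at hs
  have : a + v = b := by rw [hv]; abel
  rw [this] at hs
  simp only [zero_smul, add_zero] at hs
  linarith [hs]

lemma strong_concave_first_order' {μ : ℝ} {f : E → ℝ} (hf : StrongConcaveOn Set.univ μ f)
    {a g : E} (hg : HasGradientAt f g a) (b : E) :
    f b ≤ f a + ⟪g, b - a⟫ - μ/2 * ‖b - a‖^2 := by
  rw [strongConcaveOn_iff_convex] at hf
  have h2 : HasFDerivAt (fun y : E => μ/2 * ‖y‖^2) ((μ/2) • (2 • (innerSL ℝ a))) a :=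
    ((hasStrictFDerivAt_norm_sq a).hasFDerivAt).const_mul (μ/2)
  have h4 : HasGradientAt (fun y => f y + μ/2 * ‖y‖^2) (g + μ • a) a := by
    rw [hasGradientAt_iff_hasFDerivAt]
    have h3 := (hasGradientAt_iff_hasFDerivAt.mp hg).add h2
    refine h3.congr_fderiv ?_
    ext y
    simp [inner_add_left, real_inner_smul_left, toDual_apply_apply]
    ring
  have h5 := concave_first_order' hf h4 b
  have hexp : ⟪g + μ • a, b - a⟫ = ⟪g, b - a⟫ + μ * ⟪a, b - a⟫ := by
    simp [inner_add_left, real_inner_smul_left]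
  have hns : ‖b - a‖^2 = ‖b‖^2 - 2*⟪b,a⟫ + ‖a‖^2 := norm_sub_sq_real b a
  have hab : ⟪a, b - a⟫ = ⟪b,a⟫ - ‖a‖^2 := by
    rw [inner_sub_right, ← real_inner_self_eq_norm_sq, real_inner_comm]
  rw [hexp, hab] at h5
  rw [hns]
  linarith

lemma max_inner_nonpos' {f : E → ℝ} {Y : Set E} (hconv : Convex ℝ Y)
    {y₁ : E} (hy₁ : y₁ ∈ Y) (hmax : ∀ y ∈ Y, f y ≤ f y₁) {g : E}
    (hg : HasGradientAt f g y₁) : ∀ y ∈ Y, ⟪g, y - y₁⟫ ≤ 0 := by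
  intro y hy
  have h1 : IsLocalMaxOn f Y y₁ := (isMaxOn_iff.mpr hmax).localize
  have h2 := h1.hasFDerivWithinAt_nonpos
    (hasGradientAt_iff_hasFDerivAt.mp hg).hasFDerivWithinAt
    (sub_mem_posTangentConeAt_of_segment_subset (hconv.segment_subset hy₁ hy))
  simpa [toDual_apply_apply] using h2



set_option maxHeartbeats 2000000 in
/-- Lemma 3.2(b): generalized descent inequality for the primal function `Φ(x) = L(x, y*(x))`. -/
theorem primal_descent_inequality
    {n m : ℕ} (hn : 0 < n) (hm : 0 < m)
    (L : EuclideanSpace ℝ (Fin n) → EuclideanSpace ℝ (Fin m) → ℝ)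
    (hLdiff : Differentiable ℝ
      (fun p : (EuclideanSpace ℝ (Fin n)) × (EuclideanSpace ℝ (Fin m)) => L p.1 p.2))
    (gx : EuclideanSpace ℝ (Fin n) → EuclideanSpace ℝ (Fin m) → EuclideanSpace ℝ (Fin n))
    (gy : EuclideanSpace ℝ (Fin n) → EuclideanSpace ℝ (Fin m) → EuclideanSpace ℝ (Fin m))
    (hgx : ∀ x y, HasGradientAt (fun x' => L x' y) (gx x y) x)
    (hgy : ∀ x y, HasGradientAt (fun y' => L x y') (gy x y) y)
    (μ : ℝ) (hμ : 0 < μ)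
    (Y : Set (EuclideanSpace ℝ (Fin m)))
    (hY : Y = Set.univ ∨ (Y.Nonempty ∧ IsCompact Y ∧ Convex ℝ Y))
    (hconc : ∀ x, StrongConcaveOn Set.univ μ (L x))
    (Lx0 Lx1 Ly0 Ly1 : ℝ)
    (hLx0 : 0 ≤ Lx0) (hLx1 : 0 ≤ Lx1) (hLy0 : 0 ≤ Ly0) (hLy1 : 0 ≤ Ly1)
    (hsx : ∀ x y x' y', Real.sqrt (‖x - x'‖^2 + ‖y - y'‖^2) ≤ 1/Lx1 + 1/Ly1 →
      ‖gx x y - gx x' y'‖ ≤ (Lx0 + Lx1 * ‖gx x y‖) * Real.sqrt (‖x - x'‖^2 + ‖y - y'‖^2))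
    (hsy : ∀ x y x' y', Real.sqrt (‖x - x'‖^2 + ‖y - y'‖^2) ≤ 1/Lx1 + 1/Ly1 →
      ‖gy x y - gy x' y'‖ ≤ (Ly0 + Ly1 * ‖gy x y‖) * Real.sqrt (‖x - x'‖^2 + ‖y - y'‖^2))
    (ystar : EuclideanSpace ℝ (Fin n) → EuclideanSpace ℝ (Fin m))
    (hmem : ∀ x, ystar x ∈ Y)
    (hmax : ∀ x, ∀ y ∈ Y, L x y ≤ L x (ystar x))
    (huniq : ∀ x, ∀ y ∈ Y, (∀ z ∈ Y, L x z ≤ L x y) → y = ystar x)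
    (B : ℝ) (hB : 0 ≤ B)
    (hgradB : ∀ x, ‖gy x (ystar x)‖ ≤ B)
    (hDanskin : ∀ x, HasGradientAt (fun x' => L x' (ystar x')) (gx x (ystar x)) x)
    (κ : ℝ) (hκ : κ = (Ly0 + Ly1 * B)/μ)
    :
    ∀ x x' : EuclideanSpace ℝ (Fin n), ‖x - x'‖ ≤ 1/((1 + κ) * Lx1) →
      L x' (ystar x') ≤ L x (ystar x) + ⟪gx x (ystar x), x' - x⟫
        + ((1 + κ)/2) * (Lx0 + Lx1 * ‖gx x (ystar x)‖) * ‖x - x'‖^2 := by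
  have hκ0 : 0 ≤ κ := by
    rw [hκ]; positivity
  have hYconv : Convex ℝ Y := by
    rcases hY with rfl | ⟨_, _, h⟩
    exacts [convex_univ, h]
  -- Lipschitz continuity of ystar
  have hlip : ∀ a b : EuclideanSpace ℝ (Fin n), ‖a - b‖ ≤ 1/Lx1 + 1/Ly1 →
      ‖ystar a - ystar b‖ ≤ κ * ‖a - b‖ := by
    intro a b hab
    set y₁ := ystar a with hy₁
    set y₂ := ystar b with hy₂
    set d := ‖y₁ - y₂‖ with hd
    have hd0 : 0 ≤ d := norm_nonneg _
    rcases eq_or_lt_of_le hd0 with hdz | hdpos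
    · rw [← hdz]
      positivity
    have hVI₁ : ⟪gy a y₁, y₂ - y₁⟫ ≤ 0 :=
      max_inner_nonpos' hYconv (hmem a) (hmax a) (hgy a y₁) y₂ (hmem b)
    have hVI₂ : ⟪gy b y₂, y₁ - y₂⟫ ≤ 0 :=
      max_inner_nonpos' hYconv (hmem b) (hmax b) (hgy b y₂) y₁ (hmem a)
    have h1 := strong_concave_first_order' (hconc b) (hgy b y₁) y₂
    have h2 := strong_concave_first_order' (hconc b) (hgy b y₂) y₁
    rw [norm_sub_rev y₂ y₁, ← hd] at h1
    rw [← hd] at h2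
    -- μ d^2 ≤ ⟪gy b y₁, y₂ - y₁⟫
    have h3 : μ * d^2 ≤ ⟪gy b y₁, y₂ - y₁⟫ := by linarith
    have h4 : ⟪gy b y₁, y₂ - y₁⟫ =
        ⟪gy b y₁ - gy a y₁, y₂ - y₁⟫ + ⟪gy a y₁, y₂ - y₁⟫ := by
      rw [inner_sub_left]; ring
    have h5 : ⟪gy b y₁ - gy a y₁, y₂ - y₁⟫ ≤ ‖gy b y₁ - gy a y₁‖ * d := by
      have := real_inner_le_norm (gy b y₁ - gy a y₁) (y₂ - y₁)
      rw [norm_sub_rev y₂ y₁] at this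
      exact this.trans_eq (by rw [hd])
    have hsq : Real.sqrt (‖a - b‖^2 + ‖y₁ - y₁‖^2) = ‖a - b‖ := by
      simp [Real.sqrt_sq_eq_abs]
    have h6 := hsy a y₁ b y₁ (by rw [hsq]; exact hab)
    rw [hsq] at h6
    have h7 : ‖gy b y₁ - gy a y₁‖ ≤ (Ly0 + Ly1 * B) * ‖a - b‖ := by
      rw [norm_sub_rev]
      refine h6.trans ?_
      have : Ly0 + Ly1 * ‖gy a y₁‖ ≤ Ly0 + Ly1 * B := by
        have := hgradB a
        nlinarith
      exact mul_le_mul_of_nonneg_right this (norm_nonneg _)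
    have h8 : μ * d^2 ≤ (Ly0 + Ly1 * B) * ‖a - b‖ * d := by
      calc μ * d^2 ≤ ⟪gy b y₁, y₂ - y₁⟫ := h3
        _ = ⟪gy b y₁ - gy a y₁, y₂ - y₁⟫ + ⟪gy a y₁, y₂ - y₁⟫ := h4
        _ ≤ ‖gy b y₁ - gy a y₁‖ * d := by linarith
        _ ≤ (Ly0 + Ly1 * B) * ‖a - b‖ * d :=
          mul_le_mul_of_nonneg_right h7 hd0
    have hκμ : Ly0 + Ly1 * B = κ * μ := by
      rw [hκ]; field_simp
    rw [hκμ] at h8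
    have h9 : (μ * d) * d ≤ (μ * d) * (κ * ‖a - b‖) := by
      have e1 : (μ * d) * d = μ * d^2 := by ring
      have e2 : (μ * d) * (κ * ‖a - b‖) = κ * μ * ‖a - b‖ * d := by ring
      rw [e1, e2]; exact h8
    exact le_of_mul_le_mul_left h9 (by positivity)
  intro x x' hxx'
  rcases eq_or_lt_of_le hLx1 with hLx1z | hLx1pos
  · -- Lx1 = 0 : then the bound forces x = x'
    have h0 : (1:ℝ)/((1+κ) * Lx1) = 0 := by rw [← hLx1z]; simp
    rw [h0] at hxx'
    have hx : x = x' := by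
      rw [← sub_eq_zero, ← norm_le_zero_iff]; exact hxx'
    subst hx
    simp
  · -- main case : Lx1 > 0
    have h1κ : (0:ℝ) < 1 + κ := by linarith
    set G : EuclideanSpace ℝ (Fin n) → EuclideanSpace ℝ (Fin n) :=
      fun z => gx z (ystar z) with hG
    set v : EuclideanSpace ℝ (Fin n) := x' - x with hv
    set C : ℝ := (1 + κ) * (Lx0 + Lx1 * ‖G x‖) with hC
    have hC0 : 0 ≤ C := by positivity
    have hvnorm : ‖v‖ = ‖x - x'‖ := norm_sub_rev x' x
    have hbound : ‖v‖ ≤ 1/((1+κ) * Lx1) := by rw [hvnorm]; exact hxx'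
    have hlx : 1/((1+κ) * Lx1) ≤ 1/Lx1 := by
      apply one_div_le_one_div_of_le hLx1pos
      exact le_mul_of_one_le_left hLx1 (by linarith)
    have hly : (0:ℝ) ≤ 1/Ly1 := by positivity
    have hvr : ‖v‖ ≤ 1/Lx1 + 1/Ly1 := by linarith [hbound.trans hlx]
    -- key gradient bound along the segment
    have hkey : ∀ t : ℝ, 0 ≤ t → t ≤ 1 →
        ‖G x - G (x + t • v)‖ ≤ C * (t * ‖v‖) := by
      intro t ht0 ht1
      set z := x + t • v with hz
      have hxz : ‖x - z‖ = t * ‖v‖ := by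
        rw [hz]
        rw [show x - (x + t • v) = -(t • v) by abel]
        rw [norm_neg, norm_smul, Real.norm_eq_abs, abs_of_nonneg ht0]
      have hxzle : ‖x - z‖ ≤ ‖v‖ := by
        rw [hxz]; nlinarith [norm_nonneg v]
      have hya : ‖ystar x - ystar z‖ ≤ κ * (t * ‖v‖) := by
        have := hlip x z (hxzle.trans hvr)
        rw [hxz] at this
        exact this
      have hs1 : Real.sqrt (‖x - z‖^2 + ‖ystar x - ystar z‖^2) ≤ (1+κ) * (t * ‖v‖) := by
        have hle : ‖x - z‖^2 + ‖ystar x - ystar z‖^2 ≤ ((1+κ) * (t * ‖v‖))^2 := by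
          rw [hxz]
          nlinarith [norm_nonneg (ystar x - ystar z), norm_nonneg v,
            mul_nonneg ht0 (norm_nonneg v), mul_nonneg hκ0 (mul_nonneg ht0 (norm_nonneg v))]
        have := Real.sqrt_le_sqrt hle
        rwa [Real.sqrt_sq (by positivity)] at this
      have hs2 : Real.sqrt (‖x - z‖^2 + ‖ystar x - ystar z‖^2) ≤ 1/Lx1 + 1/Ly1 := by
        refine hs1.trans ?_
        have h1 : (1+κ) * (t * ‖v‖) ≤ (1+κ) * ‖v‖ := by
          apply mul_le_mul_of_nonneg_left _ (le_of_lt h1κ)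
          nlinarith [norm_nonneg v]
        have h2 : (1+κ) * ‖v‖ ≤ (1+κ) * (1/((1+κ)*Lx1)) :=
          mul_le_mul_of_nonneg_left hbound (le_of_lt h1κ)
        have h3 : (1+κ) * (1/((1+κ)*Lx1)) = 1/Lx1 := by
          field_simp
        linarith
      have := hsx x (ystar x) z (ystar z) hs2
      refine this.trans ?_
      calc (Lx0 + Lx1 * ‖gx x (ystar x)‖) * Real.sqrt (‖x - z‖^2 + ‖ystar x - ystar z‖^2)
          ≤ (Lx0 + Lx1 * ‖gx x (ystar x)‖) * ((1+κ) * (t * ‖v‖)) := by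
            apply mul_le_mul_of_nonneg_left hs1
            positivity
        _ = C * (t * ‖v‖) := by rw [hC, hG]; ring
    -- descent along the segment via an antitone auxiliary function
    set φ : ℝ → ℝ := fun t => L (x + t • v) (ystar (x + t • v)) with hφ
    have hφd : ∀ t : ℝ, HasDerivAt φ ⟪G (x + t • v), v⟫ t := by
      intro t
      have hline : HasDerivAt (fun s : ℝ => x + s • v) v t := by
        simpa using ((hasDerivAt_id t).smul_const v).const_add x
      have h1 := hasGradientAt_iff_hasFDerivAt.mp (hDanskin (x + t • v))
      have := h1.comp_hasDerivAt t hline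
      simp [InnerProductSpace.toDual_apply_apply] at this
      exact this
    set F : ℝ → ℝ := fun t => φ t - t * ⟪G x, v⟫ - C * ‖v‖^2 * t^2 / 2 with hF
    have hFd : ∀ t : ℝ, HasDerivAt F
        (⟪G (x + t • v), v⟫ - ⟪G x, v⟫ - C * ‖v‖^2 * t) t := by
      intro t
      have h1 : HasDerivAt (fun s : ℝ => s * ⟪G x, v⟫) ⟪G x, v⟫ t := by
        simpa using (hasDerivAt_id t).mul_const (⟪G x, v⟫ : ℝ)
      have h2 : HasDerivAt (fun s : ℝ => C * ‖v‖^2 * s^2 / 2) (C * ‖v‖^2 * t) t := by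
        have := ((hasDerivAt_pow 2 t).const_mul (C * ‖v‖^2)).div_const 2
        refine this.congr_deriv ?_
        ring
      exact ((hφd t).sub h1).sub h2
    have hanti : AntitoneOn F (Set.Icc (0:ℝ) 1) := by
      apply antitoneOn_of_deriv_nonpos (convex_Icc 0 1)
      · exact fun t _ => ((hFd t).differentiableAt).continuousAt.continuousWithinAt
      · intro t _
        exact ((hFd t).differentiableAt).differentiableWithinAt
      · intro t ht
        rw [interior_Icc] at ht
        rw [(hFd t).deriv]
        have hinner : ⟪G (x + t • v), v⟫ - ⟪G x, v⟫ = ⟪G (x + t • v) - G x, v⟫ := by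
          rw [inner_sub_left]
        have hb1 : ⟪G (x + t • v) - G x, v⟫ ≤ ‖G (x + t • v) - G x‖ * ‖v‖ :=
          real_inner_le_norm _ _
        have hb2 : ‖G (x + t • v) - G x‖ ≤ C * (t * ‖v‖) := by
          rw [norm_sub_rev]
          exact hkey t (le_of_lt ht.1) (le_of_lt ht.2)
        have hb3 : ‖G (x + t • v) - G x‖ * ‖v‖ ≤ C * (t * ‖v‖) * ‖v‖ :=
          mul_le_mul_of_nonneg_right hb2 (norm_nonneg v)
        rw [hinner]
        nlinarith [hb1, hb3]
    have hF10 : F 1 ≤ F 0 := hanti (Set.mem_Icc.mpr ⟨le_refl 0, zero_le_one⟩)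
      (Set.mem_Icc.mpr ⟨zero_le_one, le_refl 1⟩) zero_le_one
    have hF0 : F 0 = L x (ystar x) := by
      simp only [hF, hφ]
      norm_num
    have hF1 : F 1 = L x' (ystar x') - ⟪G x, v⟫ - C * ‖v‖^2 / 2 := by
      simp only [hF, hφ]
      rw [show x + (1:ℝ) • v = x' by rw [hv]; simp]
      ring
    rw [hF0, hF1] at hF10
    have hgoal : ((1 + κ)/2) * (Lx0 + Lx1 * ‖gx x (ystar x)‖) * ‖x - x'‖^2
        = C * ‖v‖^2 / 2 := by
      rw [hC, hG, hvnorm]; ring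
    rw [hgoal]
    have : ⟪G x, v⟫ = ⟪gx x (ystar x), x' - x⟫ := by rw [hG, hv]
    linarith [hF10, this.symm.le, this.le]

end Aux
end

section
/- The primal function Φ satisfies the generalized lower quadratic bound: for any x, x' ∈ ℝⁿ with ‖x − x'‖ ≤ 1/((1+κ)L_{x,1}), one has Φ(x') ≥ Φ(x) + ⟨∇Φ(x), x' − x⟩ − ((1 + κ)/2)(L_{x,0} + L_{x,1}‖∇Φ(x)‖)‖x − x'‖², where κ := (L_{y,0} + L_{y,1}B)/μ. -/
open scoped RealInnerProductSpace
open Filter Set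
open scoped Topology

section Aux

variable {E : Type*} [NormedAddCommGroup E] [InnerProductSpace ℝ E] [CompleteSpace E]

private lemma hasDerivAt_line (f : E → ℝ) (g z v : E) (t₀ : ℝ)
    (hg : HasGradientAt f g (z + t₀ • v)) :
    HasDerivAt (fun t : ℝ => f (z + t • v)) ⟪g, v⟫ t₀ := by
  have hline : HasDerivAt (fun t : ℝ => z + t • v) v t₀ := by
    simpa using ((hasDerivAt_id t₀).smul_const v).const_add z
  have h := (hasGradientAt_iff_hasFDerivAt.mp hg).comp_hasDerivAt t₀ hline
  simp only [InnerProductSpace.toDual_apply_apply] at h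
  exact h

/-- First-order condition for strong concavity (on univ). -/
private lemma strongConcave_first_order (f : E → ℝ) (μ : ℝ)
    (hsc : StrongConcaveOn Set.univ μ f) (z y : E) (g : E) (hg : HasGradientAt f g z) :
    f y ≤ f z + ⟪g, y - z⟫ - μ/2 * ‖y - z‖^2 := by
  have hd : HasDerivAt (fun t : ℝ => f (z + t • (y - z))) ⟪g, y - z⟫ 0 := by
    apply hasDerivAt_line
    simpa using hg
  set h : ℝ → ℝ := fun t => f (z + t • (y - z)) with hh
  have key : ∀ t ∈ Set.Ioo (0:ℝ) 1, f y - f z + (1 - t) * (μ/2 * ‖y - z‖^2) ≤ slope h 0 t := by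
    intro t ht
    have hcomb := hsc.2 (Set.mem_univ y) (Set.mem_univ z) ht.1.le (by linarith [ht.2] : (0:ℝ) ≤ 1 - t)
      (by ring)
    have heq : t • y + (1 - t) • z = z + t • (y - z) := by module
    rw [heq] at hcomb
    have h0 : h 0 = f z := by simp [hh]
    have hslope : slope h 0 t = (h t - h 0) / t := by simp [slope_def_field, div_eq_iff ht.1.ne']
    rw [hslope, le_div_iff₀ ht.1, h0]
    have hht : h t = f (z + t • (y - z)) := rfl
    rw [hht]
    simp only [smul_eq_mul] at hcomb
    nlinarith [hcomb]
  have h1 : Tendsto (slope h 0) (𝓝[>] (0:ℝ)) (𝓝 ⟪g, y - z⟫) :=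
    (hasDerivAt_iff_tendsto_slope.mp hd).mono_left
      (nhdsWithin_mono _ (fun t ht => ne_of_gt ht))
  have h2 : Tendsto (fun t : ℝ => f y - f z + (1 - t) * (μ/2 * ‖y - z‖^2)) (𝓝[>] (0:ℝ))
      (𝓝 (f y - f z + μ/2 * ‖y - z‖^2)) := by
    have : Continuous (fun t : ℝ => f y - f z + (1 - t) * (μ/2 * ‖y - z‖^2)) := by continuity
    have h3 : Tendsto (fun t : ℝ => f y - f z + (1 - t) * (μ/2 * ‖y - z‖^2)) (𝓝[>] (0:ℝ))
        (𝓝 (f y - f z + (1 - 0) * (μ/2 * ‖y - z‖^2))) :=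
      (this.tendsto 0).mono_left nhdsWithin_le_nhds
    simpa using h3
  have hev : ∀ᶠ t in 𝓝[>] (0:ℝ), f y - f z + (1 - t) * (μ/2 * ‖y - z‖^2) ≤ slope h 0 t := by
    filter_upwards [Ioo_mem_nhdsGT_of_mem (Set.mem_Ico.mpr ⟨le_refl _, zero_lt_one⟩)] with t ht
    exact key t ht
  have := le_of_tendsto_of_tendsto h2 h1 hev
  linarith

/-- First-order optimality condition for a maximizer over a convex set. -/
private lemma opt_nonpos (f : E → ℝ) (Y : Set E) (hconv : Convex ℝ Y) (z : E) (hz : z ∈ Y)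
    (hmax : ∀ y ∈ Y, f y ≤ f z) (g : E) (hg : HasGradientAt f g z) (w : E) (hw : w ∈ Y) :
    ⟪g, w - z⟫ ≤ 0 := by
  have hloc : IsLocalMaxOn f Y z :=
    Filter.eventually_of_mem self_mem_nhdsWithin (fun y hy => hmax y hy)
  have hcone : w - z ∈ posTangentConeAt Y z :=
    sub_mem_posTangentConeAt_of_segment_subset (hconv.segment_subset hz hw)
  have := hloc.hasFDerivWithinAt_nonpos
    (hasGradientAt_iff_hasFDerivAt.mp hg).hasFDerivWithinAt hcone
  simpa [InnerProductSpace.toDual_apply_apply] using this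

end Aux

set_option maxHeartbeats 2000000 in
/-- Lemma 3.2(c): generalized lower quadratic bound for the primal function `Φ(x) = L(x, y*(x))`. -/
theorem primal_lower_quadratic_bound
    {n m : ℕ} (hn : 0 < n) (hm : 0 < m)
    (L : EuclideanSpace ℝ (Fin n) → EuclideanSpace ℝ (Fin m) → ℝ)
    (hLdiff : Differentiable ℝ
      (fun p : (EuclideanSpace ℝ (Fin n)) × (EuclideanSpace ℝ (Fin m)) => L p.1 p.2))
    (gx : EuclideanSpace ℝ (Fin n) → EuclideanSpace ℝ (Fin m) → EuclideanSpace ℝ (Fin n))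
    (gy : EuclideanSpace ℝ (Fin n) → EuclideanSpace ℝ (Fin m) → EuclideanSpace ℝ (Fin m))
    (hgx : ∀ x y, HasGradientAt (fun x' => L x' y) (gx x y) x)
    (hgy : ∀ x y, HasGradientAt (fun y' => L x y') (gy x y) y)
    (μ : ℝ) (hμ : 0 < μ)
    (Y : Set (EuclideanSpace ℝ (Fin m)))
    (hY : Y = Set.univ ∨ (Y.Nonempty ∧ IsCompact Y ∧ Convex ℝ Y))
    (hconc : ∀ x, StrongConcaveOn Set.univ μ (L x))
    (Lx0 Lx1 Ly0 Ly1 : ℝ)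
    (hLx0 : 0 ≤ Lx0) (hLx1 : 0 ≤ Lx1) (hLy0 : 0 ≤ Ly0) (hLy1 : 0 ≤ Ly1)
    (hsx : ∀ x y x' y', Real.sqrt (‖x - x'‖^2 + ‖y - y'‖^2) ≤ 1/Lx1 + 1/Ly1 →
      ‖gx x y - gx x' y'‖ ≤ (Lx0 + Lx1 * ‖gx x y‖) * Real.sqrt (‖x - x'‖^2 + ‖y - y'‖^2))
    (hsy : ∀ x y x' y', Real.sqrt (‖x - x'‖^2 + ‖y - y'‖^2) ≤ 1/Lx1 + 1/Ly1 →
      ‖gy x y - gy x' y'‖ ≤ (Ly0 + Ly1 * ‖gy x y‖) * Real.sqrt (‖x - x'‖^2 + ‖y - y'‖^2))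
    (ystar : EuclideanSpace ℝ (Fin n) → EuclideanSpace ℝ (Fin m))
    (hmem : ∀ x, ystar x ∈ Y)
    (hmax : ∀ x, ∀ y ∈ Y, L x y ≤ L x (ystar x))
    (huniq : ∀ x, ∀ y ∈ Y, (∀ z ∈ Y, L x z ≤ L x y) → y = ystar x)
    (B : ℝ) (hB : 0 ≤ B)
    (hgradB : ∀ x, ‖gy x (ystar x)‖ ≤ B)
    (hDanskin : ∀ x, HasGradientAt (fun x' => L x' (ystar x')) (gx x (ystar x)) x)
    (κ : ℝ) (hκ : κ = (Ly0 + Ly1 * B)/μ)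
    :
    ∀ x x' : EuclideanSpace ℝ (Fin n), ‖x - x'‖ ≤ 1/((1 + κ) * Lx1) →
      L x' (ystar x') ≥ L x (ystar x) + ⟪gx x (ystar x), x' - x⟫
        - ((1 + κ)/2) * (Lx0 + Lx1 * ‖gx x (ystar x)‖) * ‖x - x'‖^2 := by
  intro x x' hxx'
  have hκ0 : 0 ≤ κ := by
    rw [hκ]; positivity
  have h1κ : (0:ℝ) < 1 + κ := by linarith
  have hYconv : Convex ℝ Y := by
    rcases hY with h | h
    · rw [h]; exact convex_univ
    · exact h.2.2
  -- degenerate case Lx1 = 0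
  rcases eq_or_lt_of_le hLx1 with hLx1' | hLx1pos
  · have h0 : (1 + κ) * Lx1 = 0 := by rw [← hLx1']; ring
    rw [h0, div_zero] at hxx'
    have : x - x' = 0 := by
      rw [← norm_le_zero_iff]; exact hxx'
    have hx' : x' = x := by
      have := sub_eq_zero.mp this; exact this.symm
    subst hx'
    simp
  -- main case
  have hseg : (1 + κ) * ‖x - x'‖ ≤ 1/Lx1 := by
    calc (1 + κ) * ‖x - x'‖ ≤ (1 + κ) * (1/((1 + κ) * Lx1)) := by
          exact mul_le_mul_of_nonneg_left hxx' h1κ.le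
      _ = 1/Lx1 := by field_simp
  have hLy1inv : (0:ℝ) ≤ 1/Ly1 := by positivity
  -- Lipschitzness of ystar
  have hyLip : ∀ z, ‖x - z‖ ≤ 1/Lx1 + 1/Ly1 → ‖ystar x - ystar z‖ ≤ κ * ‖x - z‖ := by
    intro z hz
    set y₁ := ystar x
    set y₂ := ystar z
    set d := ‖y₁ - y₂‖ with hd
    have hd0 : 0 ≤ d := norm_nonneg _
    have h1 : L z y₁ ≤ L z y₂ + ⟪gy z y₂, y₁ - y₂⟫ - μ/2 * d^2 :=
      strongConcave_first_order (L z) μ (hconc z) y₂ y₁ (gy z y₂) (hgy z y₂)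
    have h2 : L z y₂ ≤ L z y₁ + ⟪gy z y₁, y₂ - y₁⟫ - μ/2 * d^2 := by
      have := strongConcave_first_order (L z) μ (hconc z) y₁ y₂ (gy z y₁) (hgy z y₁)
      rwa [norm_sub_rev y₂ y₁] at this
    have h3 : ⟪gy z y₂, y₁ - y₂⟫ ≤ 0 :=
      opt_nonpos (L z) Y hYconv y₂ (hmem z) (hmax z) (gy z y₂) (hgy z y₂) y₁ (hmem x)
    have h4 : ⟪gy x y₁, y₂ - y₁⟫ ≤ 0 :=
      opt_nonpos (L x) Y hYconv y₁ (hmem x) (hmax x) (gy x y₁) (hgy x y₁) y₂ (hmem z)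
    have h5 : ⟪gy z y₁ - gy x y₁, y₂ - y₁⟫ ≤ ‖gy x y₁ - gy z y₁‖ * d := by
      calc ⟪gy z y₁ - gy x y₁, y₂ - y₁⟫ ≤ ‖gy z y₁ - gy x y₁‖ * ‖y₂ - y₁‖ :=
            real_inner_le_norm _ _
        _ = ‖gy x y₁ - gy z y₁‖ * d := by rw [norm_sub_rev (gy z y₁), norm_sub_rev y₂]
    have h6 : ‖gy x y₁ - gy z y₁‖ ≤ (Ly0 + Ly1 * B) * ‖x - z‖ := by
      have hsqrt : Real.sqrt (‖x - z‖^2 + ‖y₁ - y₁‖^2) = ‖x - z‖ := by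
        simp [Real.sqrt_sq (norm_nonneg _)]
      have := hsy x y₁ z y₁ (by rw [hsqrt]; exact hz)
      rw [hsqrt] at this
      calc ‖gy x y₁ - gy z y₁‖ ≤ (Ly0 + Ly1 * ‖gy x y₁‖) * ‖x - z‖ := this
        _ ≤ (Ly0 + Ly1 * B) * ‖x - z‖ := by
            have := hgradB x
            gcongr
    have hsplit : ⟪gy z y₁, y₂ - y₁⟫ =
        ⟪gy x y₁, y₂ - y₁⟫ + ⟪gy z y₁ - gy x y₁, y₂ - y₁⟫ := by
      rw [inner_sub_left]; ring
    have hmain : μ * d^2 ≤ (Ly0 + Ly1 * B) * ‖x - z‖ * d := by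
      nlinarith [h1, h2, h3, h4, h5, h6, norm_nonneg (x - z)]
    rcases eq_or_lt_of_le hd0 with hdz | hdpos
    · rw [← hdz]; positivity
    · have hκμ : κ * μ = Ly0 + Ly1 * B := by
        rw [hκ]; field_simp
      have : μ * d ≤ (Ly0 + Ly1 * B) * ‖x - z‖ := by
        nlinarith [hmain]
      rw [← hκμ] at this
      nlinarith [this]
  -- gradient bound along segment
  set G := gx x (ystar x) with hG
  have hCnn : (0:ℝ) ≤ Lx0 + Lx1 * ‖G‖ := by positivity
  have hgradLip : ∀ z, ‖x - z‖ ≤ ‖x - x'‖ →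
      ‖G - gx z (ystar z)‖ ≤ (1 + κ) * (Lx0 + Lx1 * ‖G‖) * ‖x - z‖ := by
    intro z hzle
    have hz1 : (1 + κ) * ‖x - z‖ ≤ 1/Lx1 := le_trans (by nlinarith [norm_nonneg (x - z)]) hseg
    have hz2 : ‖x - z‖ ≤ 1/Lx1 + 1/Ly1 := by
      nlinarith [norm_nonneg (x - z), hκ0]
    have hy := hyLip z hz2
    set s := Real.sqrt (‖x - z‖^2 + ‖ystar x - ystar z‖^2) with hs
    have hsle : s ≤ (1 + κ) * ‖x - z‖ := by
      rw [hs, show (1 + κ) * ‖x - z‖ = Real.sqrt (((1 + κ) * ‖x - z‖)^2) from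
        (Real.sqrt_sq (by positivity)).symm]
      apply Real.sqrt_le_sqrt
      nlinarith [norm_nonneg (x - z), norm_nonneg (ystar x - ystar z), hκ0]
    have hcond : s ≤ 1/Lx1 + 1/Ly1 := le_trans hsle (by linarith)
    have := hsx x (ystar x) z (ystar z) hcond
    calc ‖G - gx z (ystar z)‖ ≤ (Lx0 + Lx1 * ‖G‖) * s := this
      _ ≤ (1 + κ) * (Lx0 + Lx1 * ‖G‖) * ‖x - z‖ := by nlinarith [hsle, hCnn]
  -- monotonicity argument
  set v := x' - x with hv
  set a : ℝ := ⟪G, v⟫ with ha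
  set b : ℝ := ‖x - x'‖^2 with hb
  set C : ℝ := (1 + κ) * (Lx0 + Lx1 * ‖G‖) with hC
  have hvnorm : ‖v‖ = ‖x - x'‖ := norm_sub_rev _ _
  set ψ : ℝ → ℝ := fun t => L (x + t • v) (ystar (x + t • v)) - a * t + (C * b / 2) * t^2
    with hψ
  have hψd : ∀ t : ℝ, HasDerivAt ψ
      (⟪gx (x + t • v) (ystar (x + t • v)), v⟫ - a + C * b * t) t := by
    intro t
    have h1 : HasDerivAt (fun t : ℝ => L (x + t • v) (ystar (x + t • v)))
        ⟪gx (x + t • v) (ystar (x + t • v)), v⟫ t :=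
      hasDerivAt_line (fun z => L z (ystar z)) _ x v t (hDanskin (x + t • v))
    have h2 : HasDerivAt (fun t : ℝ => a * t) a t := by
      simpa using (hasDerivAt_id t).const_mul a
    have h3 : HasDerivAt (fun t : ℝ => (C * b / 2) * t^2) (C * b * t) t := by
      have := (hasDerivAt_pow 2 t).const_mul (C * b / 2)
      exact this.congr_deriv (by rw [show (2:ℕ) - 1 = 1 from rfl]; push_cast; ring)
    exact (h1.sub h2).add h3
  have hψ'nonneg : ∀ t ∈ Set.Icc (0:ℝ) 1,
      0 ≤ ⟪gx (x + t • v) (ystar (x + t • v)), v⟫ - a + C * b * t := by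
    intro t ht
    set z := x + t • v with hz
    have hxz : ‖x - z‖ = t * ‖x - x'‖ := by
      rw [hz, show x - (x + t • v) = -(t • v) by abel, norm_neg, norm_smul,
        Real.norm_eq_abs, abs_of_nonneg ht.1, hvnorm]
    have hzle : ‖x - z‖ ≤ ‖x - x'‖ := by
      rw [hxz]; nlinarith [norm_nonneg (x - x'), ht.2]
    have hlip := hgradLip z hzle
    have hinner : a - ⟪gx z (ystar z), v⟫ ≤ ‖G - gx z (ystar z)‖ * ‖v‖ := by
      have h := real_inner_le_norm (G - gx z (ystar z)) v
      rw [inner_sub_left] at h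
      linarith
    have : a - ⟪gx z (ystar z), v⟫ ≤ C * b * t := by
      calc a - ⟪gx z (ystar z), v⟫ ≤ ‖G - gx z (ystar z)‖ * ‖v‖ := hinner
        _ ≤ (C * ‖x - z‖) * ‖v‖ := by
            apply mul_le_mul_of_nonneg_right _ (norm_nonneg v)
            rw [hC]; exact hlip
        _ = C * b * t := by rw [hxz, hvnorm, hb]; ring
    linarith
  have hmono : ψ 0 ≤ ψ 1 := by
    have hcont : ContinuousOn ψ (Set.Icc (0:ℝ) 1) :=
      fun t _ => (hψd t).differentiableAt.continuousAt.continuousWithinAt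
    have hdiff : DifferentiableOn ℝ ψ (interior (Set.Icc (0:ℝ) 1)) :=
      fun t _ => (hψd t).differentiableAt.differentiableWithinAt
    have hderiv : ∀ t ∈ interior (Set.Icc (0:ℝ) 1), 0 ≤ deriv ψ t := by
      intro t ht
      rw [interior_Icc] at ht
      rw [(hψd t).deriv]
      exact hψ'nonneg t (Set.mem_Icc_of_Ioo ht)
    exact monotoneOn_of_deriv_nonneg (convex_Icc 0 1) hcont hdiff hderiv
      (Set.left_mem_Icc.mpr zero_le_one) (Set.right_mem_Icc.mpr zero_le_one) zero_le_one
  have hψ0 : ψ 0 = L x (ystar x) := by simp [hψ]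
  have hψ1 : ψ 1 = L x' (ystar x') - a + C * b / 2 := by
    have h1 : x + v = x' := by rw [hv]; abel
    simp [hψ, h1]
  rw [hψ0, hψ1] at hmono
  have hgoal : ((1 + κ)/2) * (Lx0 + Lx1 * ‖G‖) * ‖x - x'‖^2 = C * b / 2 := by
    rw [hC, hb]; ring
  rw [ge_iff_le, hgoal]
  linarith
end

section
/- Local bound on the dual gradient: for every x ∈ ℝⁿ and every y ∈ Y with ‖y − y*(x)‖ ≤ 1/(8L_{x,1}), one has ‖∇_y L(x,y)‖ ≤ (L_{y,0} + L_{y,1}B)/(8L_{x,1}) + B. -/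
open scoped RealInnerProductSpace

/-- Local bound on the dual gradient near the maximizer. -/
theorem dual_gradient_local_bound
    {n m : ℕ} (hn : 0 < n) (hm : 0 < m)
    (L : EuclideanSpace ℝ (Fin n) → EuclideanSpace ℝ (Fin m) → ℝ)
    (hLdiff : Differentiable ℝ
      (fun p : (EuclideanSpace ℝ (Fin n)) × (EuclideanSpace ℝ (Fin m)) => L p.1 p.2))
    (gx : EuclideanSpace ℝ (Fin n) → EuclideanSpace ℝ (Fin m) → EuclideanSpace ℝ (Fin n))
    (gy : EuclideanSpace ℝ (Fin n) → EuclideanSpace ℝ (Fin m) → EuclideanSpace ℝ (Fin m))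
    (hgx : ∀ x y, HasGradientAt (fun x' => L x' y) (gx x y) x)
    (hgy : ∀ x y, HasGradientAt (fun y' => L x y') (gy x y) y)
    (μ : ℝ) (hμ : 0 < μ)
    (Y : Set (EuclideanSpace ℝ (Fin m)))
    (hY : Y = Set.univ ∨ (Y.Nonempty ∧ IsCompact Y ∧ Convex ℝ Y))
    (hconc : ∀ x, StrongConcaveOn Set.univ μ (L x))
    (Lx0 Lx1 Ly0 Ly1 : ℝ)
    (hLx0 : 0 ≤ Lx0) (hLx1 : 0 ≤ Lx1) (hLy0 : 0 ≤ Ly0) (hLy1 : 0 ≤ Ly1)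
    (hsx : ∀ x y x' y', Real.sqrt (‖x - x'‖^2 + ‖y - y'‖^2) ≤ 1/Lx1 + 1/Ly1 →
      ‖gx x y - gx x' y'‖ ≤ (Lx0 + Lx1 * ‖gx x y‖) * Real.sqrt (‖x - x'‖^2 + ‖y - y'‖^2))
    (hsy : ∀ x y x' y', Real.sqrt (‖x - x'‖^2 + ‖y - y'‖^2) ≤ 1/Lx1 + 1/Ly1 →
      ‖gy x y - gy x' y'‖ ≤ (Ly0 + Ly1 * ‖gy x y‖) * Real.sqrt (‖x - x'‖^2 + ‖y - y'‖^2))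
    (ystar : EuclideanSpace ℝ (Fin n) → EuclideanSpace ℝ (Fin m))
    (hmem : ∀ x, ystar x ∈ Y)
    (hmax : ∀ x, ∀ y ∈ Y, L x y ≤ L x (ystar x))
    (huniq : ∀ x, ∀ y ∈ Y, (∀ z ∈ Y, L x z ≤ L x y) → y = ystar x)
    (B : ℝ) (hB : 0 ≤ B)
    (hgradB : ∀ x, ‖gy x (ystar x)‖ ≤ B)
    :
    ∀ x : EuclideanSpace ℝ (Fin n), ∀ y ∈ Y,
      ‖y - ystar x‖ ≤ 1/(8 * Lx1) →
      ‖gy x y‖ ≤ (Ly0 + Ly1 * B)/(8 * Lx1) + B := by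
  intro x y hy hd
  rcases eq_or_lt_of_le hLx1 with h0 | hpos
  · -- Lx1 = 0
    have h8 : (8 : ℝ) * Lx1 = 0 := by rw [← h0]; ring
    rw [h8, div_zero] at hd ⊢
    have hye : y = ystar x := sub_eq_zero.mp
      (norm_eq_zero.mp (le_antisymm hd (norm_nonneg _)))
    rw [hye]
    simpa using hgradB x
  · -- Lx1 > 0
    have hs : Real.sqrt (‖x - x‖^2 + ‖ystar x - y‖^2) = ‖ystar x - y‖ := by
      rw [sub_self, norm_zero]
      simpa using Real.sqrt_sq (norm_nonneg (ystar x - y))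
    have hnorm : ‖ystar x - y‖ ≤ 1/(8 * Lx1) := by
      rw [← norm_neg]; simpa using hd
    have hcond : Real.sqrt (‖x - x‖^2 + ‖ystar x - y‖^2) ≤ 1/Lx1 + 1/Ly1 := by
      rw [hs]
      have h1 : 1/(8 * Lx1) ≤ 1/Lx1 := by
        apply one_div_le_one_div_of_le hpos; linarith
      have h2 : (0:ℝ) ≤ 1/Ly1 := by positivity
      linarith
    have key := hsy x (ystar x) x y hcond
    rw [hs] at key
    have hgb := hgradB x
    have hfac : (Ly0 + Ly1 * ‖gy x (ystar x)‖) * ‖ystar x - y‖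
        ≤ (Ly0 + Ly1 * B) * (1/(8 * Lx1)) := by
      apply mul_le_mul _ hnorm (norm_nonneg _) (by positivity)
      nlinarith
    have htri : ‖gy x y‖ ≤ ‖gy x (ystar x)‖ + ‖gy x (ystar x) - gy x y‖ := by
      have := norm_sub_norm_le (gy x (ystar x)) (gy x y)
      have h2 := norm_le_norm_add_norm_sub' (gy x y) (gy x (ystar x))
      simpa [norm_sub_rev] using h2
    calc ‖gy x y‖ ≤ ‖gy x (ystar x)‖ + ‖gy x (ystar x) - gy x y‖ := htri
      _ ≤ B + (Ly0 + Ly1 * B) * (1/(8 * Lx1)) := by linarith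
      _ = (Ly0 + Ly1 * B)/(8 * Lx1) + B := by ring
end

section
/- Localized one-step expected contraction: fix x ∈ ℝⁿ and y ∈ Y with ‖y − y*(x)‖ ≤ 1/(8L_{x,1}) such that, whenever ∇_y L(x,y) ≠ 0, the point y + ∇_y L(x,y)/(L_{y,0} + L_{y,1}‖∇_y L(x,y)‖) belongs to Y (this holds automatically when Y = ℝᵐ). Let G be a random vector in ℝᵐ with E[G] = ∇_y L(x,y) and E‖G − ∇_y L(x,y)‖² ≤ σ², let 0 < η ≤ 1/L_y, and set y⁺ := proj_Y(y + ηG). Then E‖y*(x) − y⁺‖² ≤ (1 − μη)‖y*(x) − y‖² + η²σ². -/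
open MeasureTheory
open scoped RealInnerProductSpace
open Filter Set
open scoped Topology

set_option linter.unusedSectionVars false
set_option linter.unusedTactic false
set_option maxHeartbeats 1000000

section Aux
variable {E : Type*} [NormedAddCommGroup E] [InnerProductSpace ℝ E] [CompleteSpace E]

lemma line_hasDerivAt (f : E → ℝ) (g : E → E) (hg : ∀ w, HasGradientAt f (g w) w)
    (p v : E) (t : ℝ) :
    HasDerivAt (fun s : ℝ => f (p + s • v)) ⟪g (p + t • v), v⟫ t := by
  have h1 : HasFDerivAt f (InnerProductSpace.toDual ℝ E (g (p + t • v))) (p + t • v) :=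
    hasGradientAt_iff_hasFDerivAt.mp (hg _)
  have h2 : HasDerivAt (fun s : ℝ => p + s • v) v t := by
    simpa using ((hasDerivAt_id t).smul_const v).const_add p
  have h3 := h1.comp_hasDerivAt t h2
  exact h3

lemma slope_limit_ge {φ : ℝ → ℝ} {d : ℝ} (hφ : HasDerivAt φ d 0)
    {c : ℝ → ℝ} {c₀ : ℝ} (hc : Tendsto c (𝓝[>] (0:ℝ)) (𝓝 c₀))
    (h : ∀ t ∈ Set.Ioo (0:ℝ) 1, c t ≤ (φ t - φ 0)/t) : c₀ ≤ d := by
  have hs : Tendsto (slope φ 0) (𝓝[>] (0:ℝ)) (𝓝 d) :=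
    (hasDerivAt_iff_tendsto_slope.mp hφ).mono_left
      (nhdsWithin_mono _ (fun t ht => by simpa using ne_of_gt ht))
  refine le_of_tendsto_of_tendsto hc hs ?_
  filter_upwards [Ioo_mem_nhdsGT_of_mem (by norm_num : (0:ℝ) ∈ Set.Ico (0:ℝ) 1)] with t ht
  simpa [slope_def_field] using h t ht

lemma strongConcave_grad_ineq {f : E → ℝ} {μ : ℝ} (hf : StrongConcaveOn Set.univ μ f)
    {g : E → E} (hg : ∀ w, HasGradientAt f (g w) w) (p z : E) :
    f z - f p + μ/2 * ‖z - p‖^2 ≤ ⟪g p, z - p⟫ := by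
  set M : ℝ := μ/2 * ‖z - p‖^2 with hM
  have hφ : HasDerivAt (fun s : ℝ => f (p + s • (z - p))) ⟪g p, z - p⟫ 0 := by
    have := line_hasDerivAt f g hg p (z - p) 0
    simpa using this
  have hc : Tendsto (fun t : ℝ => f z - f p + (1 - t) * M) (𝓝[>] (0:ℝ))
      (𝓝 (f z - f p + M)) := by
    have : Tendsto (fun t : ℝ => f z - f p + (1 - t) * M) (𝓝 (0:ℝ))
        (𝓝 (f z - f p + (1 - 0) * M)) := by
      apply Continuous.tendsto
      continuity
    simpa using this.mono_left nhdsWithin_le_nhds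
  have := slope_limit_ge hφ hc ?_
  · linarith
  intro t ht
  obtain ⟨ht0, ht1⟩ := ht
  have hkey : t * f z + (1 - t) * f p + t * (1 - t) * M ≤ f (p + t • (z - p)) := by
    have h2 := hf.2 (Set.mem_univ z) (Set.mem_univ p)
      (show (0:ℝ) ≤ t from le_of_lt ht0) (show (0:ℝ) ≤ 1 - t by linarith)
      (show t + (1 - t) = 1 by ring)
    have heq : t • z + (1 - t) • p = p + t • (z - p) := by module
    rw [heq] at h2
    simpa [smul_eq_mul, hM] using h2
  rw [le_div_iff₀ ht0]
  have h0 : f (p + (0:ℝ) • (z - p)) = f p := by simp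
  nlinarith

lemma max_first_order {f : E → ℝ} {g : E → E} (hg : ∀ w, HasGradientAt f (g w) w)
    {p z : E} (hmax : ∀ t ∈ Set.Icc (0:ℝ) 1, f (p + t • (z - p)) ≤ f p) :
    ⟪g p, z - p⟫ ≤ 0 := by
  have hφ : HasDerivAt (fun s : ℝ => f (p + s • (z - p))) ⟪g p, z - p⟫ 0 := by
    have := line_hasDerivAt f g hg p (z - p) 0
    simpa using this
  have hs : Tendsto (slope (fun s : ℝ => f (p + s • (z - p))) 0) (𝓝[>] (0:ℝ))
      (𝓝 ⟪g p, z - p⟫) :=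
    (hasDerivAt_iff_tendsto_slope.mp hφ).mono_left
      (nhdsWithin_mono _ (fun t ht => by simpa using ne_of_gt ht))
  refine le_of_tendsto hs ?_
  filter_upwards [Ioo_mem_nhdsGT_of_mem (by norm_num : (0:ℝ) ∈ Set.Ico (0:ℝ) 1)] with t ht
  rw [slope_def_field]
  have h1 : f (p + t • (z - p)) ≤ f p := hmax t ⟨le_of_lt ht.1, le_of_lt ht.2⟩
  have h2 : f (p + (0:ℝ) • (z - p)) = f p := by simp
  apply div_nonpos_of_nonpos_of_nonneg
  · rw [h2]; linarith
  · linarith [ht.1]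

lemma proj_nonexpansive {Y : Set E} (hYc : Convex ℝ Y) (projY : E → E)
    (hproj : ∀ z, projY z ∈ Y ∧ ∀ w ∈ Y, ‖z - projY z‖ ≤ ‖z - w‖)
    (z : E) {w : E} (hw : w ∈ Y) : ‖projY z - w‖ ≤ ‖z - w‖ := by
  set q := projY z with hqdef
  have hq : q ∈ Y := (hproj z).1
  have hiq : ⟪z - q, w - q⟫ ≤ 0 := by
    have key : ∀ t ∈ Set.Ioo (0:ℝ) 1, ⟪z - q, w - q⟫ ≤ t/2 * ‖w - q‖^2 := by
      intro t ht
      have hmem : q + t • (w - q) ∈ Y := by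
        have := hYc hq hw (by linarith [ht.2] : (0:ℝ) ≤ 1 - t) (le_of_lt ht.1) (by ring)
        convert this using 1
        module
      have h1 : ‖z - q‖ ≤ ‖z - (q + t • (w - q))‖ := (hproj z).2 _ hmem
      have heq : z - (q + t • (w - q)) = (z - q) - t • (w - q) := by module
      have h2 : ‖z - (q + t • (w - q))‖^2
          = ‖z - q‖^2 - 2*(t*⟪z - q, w - q⟫) + t^2*‖w - q‖^2 := by
        rw [heq, norm_sub_sq_real, real_inner_smul_right, norm_smul, mul_pow,
          Real.norm_eq_abs, abs_of_pos ht.1]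
      have h1' : ‖z - q‖^2 ≤ ‖z - (q + t • (w - q))‖^2 := by
        have := norm_nonneg (z - q); nlinarith
      nlinarith [ht.1]
    have htend : Tendsto (fun t : ℝ => t/2 * ‖w - q‖^2) (𝓝[>] (0:ℝ)) (𝓝 0) := by
      have : Tendsto (fun t : ℝ => t/2 * ‖w - q‖^2) (𝓝 (0:ℝ)) (𝓝 (0/2 * ‖w - q‖^2)) := by
        apply Continuous.tendsto
        continuity
      simpa using this.mono_left nhdsWithin_le_nhds
    refine ge_of_tendsto htend ?_
    filter_upwards [Ioo_mem_nhdsGT_of_mem (by norm_num : (0:ℝ) ∈ Set.Ico (0:ℝ) 1)] with t ht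
    exact key t ht
  have hexp : ‖z - w‖^2 = ‖z - q‖^2 - 2*⟪z - q, w - q⟫ + ‖q - w‖^2 := by
    have heq : z - w = (z - q) - (w - q) := by module
    rw [heq, norm_sub_sq_real]
    rw [show ‖w - q‖ = ‖q - w‖ from norm_sub_rev _ _]
  have : ‖q - w‖^2 ≤ ‖z - w‖^2 := by nlinarith [norm_nonneg (z - q)]
  nlinarith [norm_nonneg (q - w), norm_nonneg (z - w)]

lemma chain_lipschitz {gfun : E → E} {cL r : ℝ} (hr : 0 < r)
    (hloc : ∀ w w' : E, ‖w - w'‖ ≤ r → ‖gfun w - gfun w'‖ ≤ cL * ‖w - w'‖) :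
    ∀ w w' : E, ‖gfun w - gfun w'‖ ≤ cL * ‖w - w'‖ := by
  have main : ∀ N : ℕ, ∀ w w' : E, ‖w - w'‖ ≤ (N + 1) * r →
      ‖gfun w - gfun w'‖ ≤ cL * ‖w - w'‖ := by
    intro N
    induction N with
    | zero => intro w w' hww; exact hloc w w' (by simpa using hww)
    | succ N ih =>
      intro w w' hww
      by_cases hsmall : ‖w - w'‖ ≤ r
      · exact hloc w w' hsmall
      push_neg at hsmall
      set dwn : ℝ := ‖w - w'‖ with hdwn
      have hdpos : 0 < dwn := hr.trans hsmall
      set w'' : E := w + (r / dwn) • (w' - w) with hw''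
      have h1 : ‖w - w''‖ = r := by
        have : w - w'' = -((r / dwn) • (w' - w)) := by rw [hw'']; module
        rw [this, norm_neg, norm_smul, Real.norm_eq_abs,
          abs_of_pos (div_pos hr hdpos), norm_sub_rev, ← hdwn,
          div_mul_cancel₀ _ hdpos.ne']
      have h2 : ‖w'' - w'‖ = dwn - r := by
        have : w'' - w' = (1 - r / dwn) • (w - w') := by rw [hw'']; module
        rw [this, norm_smul, Real.norm_eq_abs, ← hdwn,
          abs_of_nonneg (by rw [sub_nonneg, div_le_one hdpos]; exact hsmall.le),
          sub_mul, one_mul, div_mul_cancel₀ _ hdpos.ne']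
      have h3 : ‖gfun w - gfun w''‖ ≤ cL * r := by
        simpa [h1] using hloc w w'' (le_of_eq h1)
      have h4 : ‖gfun w'' - gfun w'‖ ≤ cL * (dwn - r) := by
        have := ih w'' w' (by rw [h2]; push_cast at hww ⊢; linarith)
        rwa [h2] at this
      calc ‖gfun w - gfun w'‖ ≤ ‖gfun w - gfun w''‖ + ‖gfun w'' - gfun w'‖ :=
            norm_sub_le_norm_sub_add_norm_sub _ _ _
        _ ≤ cL * r + cL * (dwn - r) := add_le_add h3 h4
        _ = cL * dwn := by ring
  intro w w'
  obtain ⟨N, hN⟩ := exists_nat_gt (‖w - w'‖ / r)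
  refine main N w w' ?_
  have := (div_lt_iff₀ hr).mp hN
  push_cast
  nlinarith [hr.le]

lemma descent_step {f : E → ℝ} {g : E → E} (hg : ∀ w, HasGradientAt f (g w) w)
    (y : E) {c : ℝ} (hc : 0 < c)
    (hlip : ∀ t ∈ Set.Icc (0:ℝ) c⁻¹, ‖g (y + t • g y) - g y‖ ≤ c * t * ‖g y‖) :
    f y + ‖g y‖^2 / (2 * c) ≤ f (y + c⁻¹ • g y) := by
  set A : ℝ := ‖g y‖^2 with hA
  set χ : ℝ → ℝ := fun t => f (y + t • g y) - t * A + c * t^2 * (A/2) with hχ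
  have hderiv : ∀ t : ℝ, HasDerivAt χ (⟪g (y + t • g y), g y⟫ - A + c * (2 * t) * (A/2)) t := by
    intro t
    have h1 := line_hasDerivAt f g hg y (g y) t
    have h2 : HasDerivAt (fun t : ℝ => t * A) A t := by
      simpa using (hasDerivAt_id t).mul_const A
    have h3 : HasDerivAt (fun t : ℝ => c * t^2 * (A/2)) (c * (2 * t) * (A/2)) t := by
      have := ((hasDerivAt_pow 2 t).const_mul c).mul_const (A/2)
      simpa [mul_comm, mul_assoc, mul_left_comm] using this
    exact (h1.sub h2).add h3
  have hmono : MonotoneOn χ (Set.Icc 0 c⁻¹) := by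
    apply monotoneOn_of_deriv_nonneg (convex_Icc _ _)
    · exact fun t _ => ((hderiv t).differentiableAt).continuousAt.continuousWithinAt
    · exact fun t _ => ((hderiv t).differentiableAt).differentiableWithinAt
    · intro t ht
      rw [interior_Icc] at ht
      rw [(hderiv t).deriv]
      have hip : ⟪g (y + t • g y), g y⟫ ≥ A - c * t * ‖g y‖ * ‖g y‖ := by
        have e1 : ⟪g (y + t • g y), g y⟫ = ⟪g y, g y⟫ + ⟪g (y + t • g y) - g y, g y⟫ := by
          rw [← inner_add_left]; congr 1; module
        have e2 : |⟪g (y + t • g y) - g y, g y⟫| ≤ ‖g (y + t • g y) - g y‖ * ‖g y‖ :=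
          abs_real_inner_le_norm _ _
        have e3 := hlip t ⟨ht.1.le, ht.2.le⟩
        have e4 : ⟪g y, g y⟫ = A := real_inner_self_eq_norm_sq _
        nlinarith [abs_nonneg (⟪g (y + t • g y) - g y, g y⟫), neg_abs_le (⟪g (y + t • g y) - g y, g y⟫), norm_nonneg (g y)]
      have htc : c * t ≤ 1 := by
        have := ht.2.le
        calc c * t ≤ c * c⁻¹ := by nlinarith [hc.le]
          _ = 1 := mul_inv_cancel₀ hc.ne'
      nlinarith [ht.1.le, norm_nonneg (g y), sq_nonneg (‖g y‖)]
  have h01 : (0:ℝ) ∈ Set.Icc (0:ℝ) c⁻¹ := ⟨le_refl _, by positivity⟩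
  have hc1 : (c⁻¹:ℝ) ∈ Set.Icc (0:ℝ) c⁻¹ := ⟨by positivity, le_refl _⟩
  have := hmono h01 hc1 (by positivity)
  rw [hχ] at this
  norm_num at this
  have hcne : c ≠ 0 := hc.ne'
  have efin : c⁻¹ * A - c * (c^2)⁻¹ * (A/2) = A / (2*c) := by
    field_simp
    ring
  linarith [this]

end Aux

/-- Localized one-step expected contraction of projected stochastic gradient ascent. -/
theorem projected_ascent_one_step_localized
    {n m : ℕ} (hn : 0 < n) (hm : 0 < m)
    (L : EuclideanSpace ℝ (Fin n) → EuclideanSpace ℝ (Fin m) → ℝ)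
    (hLdiff : Differentiable ℝ
      (fun p : (EuclideanSpace ℝ (Fin n)) × (EuclideanSpace ℝ (Fin m)) => L p.1 p.2))
    (gx : EuclideanSpace ℝ (Fin n) → EuclideanSpace ℝ (Fin m) → EuclideanSpace ℝ (Fin n))
    (gy : EuclideanSpace ℝ (Fin n) → EuclideanSpace ℝ (Fin m) → EuclideanSpace ℝ (Fin m))
    (hgx : ∀ x y, HasGradientAt (fun x' => L x' y) (gx x y) x)
    (hgy : ∀ x y, HasGradientAt (fun y' => L x y') (gy x y) y)
    (μ : ℝ) (hμ : 0 < μ)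
    (Y : Set (EuclideanSpace ℝ (Fin m)))
    (hY : Y = Set.univ ∨ (Y.Nonempty ∧ IsCompact Y ∧ Convex ℝ Y))
    (hconc : ∀ x, StrongConcaveOn Set.univ μ (L x))
    (Lx0 Lx1 Ly0 Ly1 : ℝ)
    (hLx0 : 0 ≤ Lx0) (hLx1 : 0 ≤ Lx1) (hLy0 : 0 ≤ Ly0) (hLy1 : 0 ≤ Ly1)
    (hsx : ∀ x y x' y', Real.sqrt (‖x - x'‖^2 + ‖y - y'‖^2) ≤ 1/Lx1 + 1/Ly1 →
      ‖gx x y - gx x' y'‖ ≤ (Lx0 + Lx1 * ‖gx x y‖) * Real.sqrt (‖x - x'‖^2 + ‖y - y'‖^2))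
    (hsy : ∀ x y x' y', Real.sqrt (‖x - x'‖^2 + ‖y - y'‖^2) ≤ 1/Lx1 + 1/Ly1 →
      ‖gy x y - gy x' y'‖ ≤ (Ly0 + Ly1 * ‖gy x y‖) * Real.sqrt (‖x - x'‖^2 + ‖y - y'‖^2))
    (ystar : EuclideanSpace ℝ (Fin n) → EuclideanSpace ℝ (Fin m))
    (hmem : ∀ x, ystar x ∈ Y)
    (hmax : ∀ x, ∀ y ∈ Y, L x y ≤ L x (ystar x))
    (huniq : ∀ x, ∀ y ∈ Y, (∀ z ∈ Y, L x z ≤ L x y) → y = ystar x)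
    (B : ℝ) (hB : 0 ≤ B)
    (hgradB : ∀ x, ‖gy x (ystar x)‖ ≤ B)
    (projY : EuclideanSpace ℝ (Fin m) → EuclideanSpace ℝ (Fin m))
    (hproj : ∀ z, projY z ∈ Y ∧ ∀ w ∈ Y, ‖z - projY z‖ ≤ ‖z - w‖)
    (Ly : ℝ) (hLyDef : Ly = Ly0 + Ly1 * ((Ly0 + Ly1 * B)/(8 * Lx1) + B))
    {Ω : Type*} [MeasurableSpace Ω] (P : Measure Ω) [IsProbabilityMeasure P]
    (x : EuclideanSpace ℝ (Fin n)) (y : EuclideanSpace ℝ (Fin m)) (hyY : y ∈ Y)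
    (hnear : ‖y - ystar x‖ ≤ 1/(8 * Lx1))
    (hstep : gy x y ≠ 0 → y + (Ly0 + Ly1 * ‖gy x y‖)⁻¹ • gy x y ∈ Y)
    (G : Ω → EuclideanSpace ℝ (Fin m))
    (hGint : Integrable G P)
    (hGmean : ∫ ω, G ω ∂P = gy x y)
    (σ : ℝ)
    (hGvarInt : Integrable (fun ω => ‖G ω - gy x y‖^2) P)
    (hGvar : ∫ ω, ‖G ω - gy x y‖^2 ∂P ≤ σ^2)
    (η : ℝ) (hη : 0 < η) (hηLy : η ≤ 1/Ly) :
    ∫ ω, ‖ystar x - projY (y + η • G ω)‖^2 ∂P ≤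
      (1 - μ * η) * ‖ystar x - y‖^2 + η^2 * σ^2 := by
  classical
  have hYconv : Convex ℝ Y := by
    rcases hY with h | h
    · rw [h]; exact convex_univ
    · exact h.2.2
  have hgrads : ∀ w, HasGradientAt (L x) (gy x w) w := fun w => hgy x w
  have hSC : L x (ystar x) - L x y + μ/2 * ‖ystar x - y‖^2 ≤ ⟪gy x y, ystar x - y⟫ :=
    strongConcave_grad_ineq (hconc x) hgrads y (ystar x)
  have hΔ0 : 0 ≤ L x (ystar x) - L x y := sub_nonneg.mpr (hmax x y hyY)
  have hsqrt : ∀ w w' : EuclideanSpace ℝ (Fin m),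
      Real.sqrt (‖x - x‖^2 + ‖w - w'‖^2) = ‖w - w'‖ := by
    intro w w'
    rw [sub_self, norm_zero,
      show (0:ℝ)^2 + ‖w - w'‖^2 = ‖w - w'‖^2 by ring]
    exact Real.sqrt_sq (norm_nonneg _)
  -- the key deterministic inequality
  have main2 : μ/2 * ‖ystar x - y‖^2 + η/2 * ‖gy x y‖^2 ≤ ⟪gy x y, ystar x - y⟫ := by
    by_cases hg0 : gy x y = 0
    · have h1 : ⟪gy x y, ystar x - y⟫ = (0:ℝ) := by rw [hg0]; exact inner_zero_left _
      have h2 : ‖ystar x - y‖^2 ≤ 0 := by nlinarith [hSC, hΔ0, hμ, h1]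
      rw [hg0, norm_zero,
        show ⟪(0:EuclideanSpace ℝ (Fin m)), ystar x - y⟫ = (0:ℝ) from inner_zero_left _]
      nlinarith [hμ, hη]
    · have hgn : 0 < ‖gy x y‖ := norm_pos_iff.mpr hg0
      have hcnn : 0 ≤ Ly0 + Ly1 * ‖gy x y‖ := by positivity
      have hcpos : 0 < Ly0 + Ly1 * ‖gy x y‖ := by
        rcases hcnn.lt_or_eq with h | h
        · exact h
        · exfalso
          have hm1 : 0 ≤ Ly1 * ‖gy x y‖ := mul_nonneg hLy1 hgn.le
          have hLy00 : Ly0 = 0 := by linarith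
          have hLy10 : Ly1 = 0 := by nlinarith
          rw [hLyDef, hLy00, hLy10] at hηLy
          norm_num at hηLy
          linarith
      have hz : y + (Ly0 + Ly1 * ‖gy x y‖)⁻¹ • gy x y ∈ Y := hstep hg0
      rcases hLx1.lt_or_eq with hLx1p | hLx1z
      · -- Lx1 > 0 : quantitative case
        have hrR : ‖ystar x - y‖ ≤ 1/Lx1 + 1/Ly1 := by
          have h1 : ‖ystar x - y‖ = ‖y - ystar x‖ := norm_sub_rev _ _
          have h2 : 1/(8*Lx1) ≤ 1/Lx1 :=
            one_div_le_one_div_of_le hLx1p (by linarith)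
          have h3 : 0 ≤ 1/Ly1 := by positivity
          linarith [hnear]
        have hB1 := hsy x (ystar x) x y (by rw [hsqrt]; exact hrR)
        rw [hsqrt] at hB1
        have ht1 : ‖gy x y‖ ≤ ‖gy x (ystar x)‖ + ‖gy x (ystar x) - gy x y‖ := by
          calc ‖gy x y‖ = ‖gy x (ystar x) - (gy x (ystar x) - gy x y)‖ := by
                rw [sub_sub_cancel]
            _ ≤ ‖gy x (ystar x)‖ + ‖gy x (ystar x) - gy x y‖ := norm_sub_le _ _
        have hgB : ‖gy x y‖ ≤ B + (Ly0 + Ly1*B) * ‖ystar x - y‖ := by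
          have h4 : (Ly0 + Ly1*‖gy x (ystar x)‖) * ‖ystar x - y‖
              ≤ (Ly0 + Ly1*B) * ‖ystar x - y‖ :=
            mul_le_mul_of_nonneg_right
              (by nlinarith [mul_le_mul_of_nonneg_left (hgradB x) hLy1]) (norm_nonneg _)
          linarith [hgradB x, hB1]
        have hr8 : ‖ystar x - y‖ ≤ 1/(8*Lx1) := by
          rw [norm_sub_rev]; exact hnear
        have h3 : (Ly0 + Ly1*B) * ‖ystar x - y‖ ≤ (Ly0 + Ly1*B) / (8*Lx1) := by
          have hnn : (0:ℝ) ≤ Ly0 + Ly1*B := by positivity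
          calc (Ly0 + Ly1*B) * ‖ystar x - y‖ ≤ (Ly0 + Ly1*B) * (1/(8*Lx1)) :=
                mul_le_mul_of_nonneg_left hr8 hnn
            _ = (Ly0 + Ly1*B)/(8*Lx1) := by ring
        have hcLy : Ly0 + Ly1 * ‖gy x y‖ ≤ Ly := by
          rw [hLyDef]
          have h4 : ‖gy x y‖ ≤ (Ly0 + Ly1*B)/(8*Lx1) + B := by linarith
          nlinarith [mul_le_mul_of_nonneg_left h4 hLy1]
        have hηc : η ≤ (Ly0 + Ly1 * ‖gy x y‖)⁻¹ := by
          have h5 : 1/Ly ≤ 1/(Ly0 + Ly1 * ‖gy x y‖) :=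
            one_div_le_one_div_of_le hcpos hcLy
          have h6 : 1/(Ly0 + Ly1 * ‖gy x y‖) = (Ly0 + Ly1 * ‖gy x y‖)⁻¹ := one_div _
          linarith [hηLy]
        have hseglip : ∀ t ∈ Set.Icc (0:ℝ) (Ly0 + Ly1*‖gy x y‖)⁻¹,
            ‖gy x (y + t • gy x y) - gy x y‖ ≤ (Ly0 + Ly1*‖gy x y‖) * t * ‖gy x y‖ := by
          intro t ht
          have hnrm : ‖y - (y + t • gy x y)‖ = t * ‖gy x y‖ := by
            rw [show y - (y + t • gy x y) = -(t • gy x y) by module, norm_neg, norm_smul,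
              Real.norm_eq_abs, abs_of_nonneg ht.1]
          rcases hLy1.lt_or_eq with hLy1p | hLy1z
          · have hcond : t * ‖gy x y‖ ≤ 1/Lx1 + 1/Ly1 := by
              have h5 : t * ‖gy x y‖ ≤ (Ly0 + Ly1*‖gy x y‖)⁻¹ * ‖gy x y‖ :=
                mul_le_mul_of_nonneg_right ht.2 (norm_nonneg _)
              have h6 : (Ly0 + Ly1*‖gy x y‖)⁻¹ * ‖gy x y‖ ≤ 1/Ly1 := by
                rw [inv_mul_eq_div, div_le_div_iff₀ hcpos hLy1p]
                nlinarith [hgn]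
              have h7 : (0:ℝ) ≤ 1/Lx1 := by positivity
              linarith
            have h8 := hsy x y x (y + t • gy x y) (by rw [hsqrt, hnrm]; exact hcond)
            rw [hsqrt, hnrm] at h8
            calc ‖gy x (y + t • gy x y) - gy x y‖
                = ‖gy x y - gy x (y + t • gy x y)‖ := norm_sub_rev _ _
              _ ≤ (Ly0 + Ly1*‖gy x y‖) * (t * ‖gy x y‖) := h8
              _ = (Ly0 + Ly1*‖gy x y‖) * t * ‖gy x y‖ := by ring
          · -- Ly1 = 0 : chain the local Lipschitz bound
            have hLy1z' : Ly1 = 0 := hLy1z.symm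
            have hloc : ∀ w w' : EuclideanSpace ℝ (Fin m), ‖w - w'‖ ≤ 1/Lx1 →
                ‖gy x w - gy x w'‖ ≤ Ly0 * ‖w - w'‖ := by
              intro w w' hww
              have h9 := hsy x w x w' (by
                rw [hsqrt]
                have : (0:ℝ) ≤ 1/Ly1 := by positivity
                linarith)
              rw [hsqrt] at h9
              calc ‖gy x w - gy x w'‖ ≤ (Ly0 + Ly1 * ‖gy x w‖) * ‖w - w'‖ := h9
                _ = Ly0 * ‖w - w'‖ := by rw [hLy1z']; ring
            have hchain := chain_lipschitz (by positivity : (0:ℝ) < 1/Lx1) hloc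
            have h8 := hchain (y + t • gy x y) y
            rw [show (y + t • gy x y) - y = t • gy x y by module, norm_smul,
              Real.norm_eq_abs, abs_of_nonneg ht.1] at h8
            calc ‖gy x (y + t • gy x y) - gy x y‖ ≤ Ly0 * (t * ‖gy x y‖) := h8
              _ = (Ly0 + Ly1*‖gy x y‖) * t * ‖gy x y‖ := by rw [hLy1z']; ring
        have hdesc := descent_step hgrads y hcpos hseglip
        have h9 := hmax x _ hz
        have h10 : η * ‖gy x y‖^2 ≤ (Ly0 + Ly1*‖gy x y‖)⁻¹ * ‖gy x y‖^2 :=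
          mul_le_mul_of_nonneg_right hηc (sq_nonneg _)
        have h12 : ‖gy x y‖^2/(2*(Ly0 + Ly1*‖gy x y‖))
            = (Ly0 + Ly1*‖gy x y‖)⁻¹ * ‖gy x y‖^2/2 := by
          field_simp
        linarith [hSC, hdesc, h9, h10, h12]
      · -- Lx1 = 0 : forces y = ystar x, then first-order optimality gives contradiction
        exfalso
        have hyz : y = ystar x := by
          have h0 : (1:ℝ)/(8*Lx1) = 0 := by rw [← hLx1z]; norm_num
          have h1 : ‖y - ystar x‖ ≤ 0 := by linarith [hnear]
          have h2 : ‖y - ystar x‖ = 0 := le_antisymm h1 (norm_nonneg _)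
          exact sub_eq_zero.mp (norm_eq_zero.mp h2)
        have hseg : ∀ t ∈ Set.Icc (0:ℝ) 1,
            L x (y + t • ((y + (Ly0 + Ly1*‖gy x y‖)⁻¹ • gy x y) - y)) ≤ L x y := by
          intro t ht
          have hmem2 : y + t • ((y + (Ly0 + Ly1*‖gy x y‖)⁻¹ • gy x y) - y) ∈ Y := by
            have h5 := hYconv hyY hz (by linarith [ht.2] : (0:ℝ) ≤ 1 - t) ht.1 (by ring)
            convert h5 using 1
            module
          have h6 := hmax x _ hmem2
          rw [← hyz] at h6
          exact h6
        have hfo := max_first_order hgrads hseg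
        rw [show (y + (Ly0 + Ly1*‖gy x y‖)⁻¹ • gy x y) - y
            = (Ly0 + Ly1*‖gy x y‖)⁻¹ • gy x y by module,
          real_inner_smul_right, real_inner_self_eq_norm_sq] at hfo
        have hpos := mul_pos (inv_pos.mpr hcpos) (pow_pos hgn 2)
        linarith
  have hkey : ‖(ystar x - y) - η • gy x y‖^2 ≤ (1 - μ*η) * ‖ystar x - y‖^2 := by
    have hexp : ‖(ystar x - y) - η • gy x y‖^2
        = ‖ystar x - y‖^2 - 2*(η*⟪ystar x - y, gy x y⟫) + η^2*‖gy x y‖^2 := by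
      rw [norm_sub_sq_real, real_inner_smul_right, norm_smul, Real.norm_eq_abs,
        abs_of_pos hη, mul_pow]
    have hcomm : ⟪ystar x - y, gy x y⟫ = ⟪gy x y, ystar x - y⟫ := real_inner_comm _ _
    rw [hexp, hcomm]
    nlinarith [mul_le_mul_of_nonneg_left main2 hη.le]
  -- probabilistic part
  have hint2 : Integrable (fun ω => ⟪(ystar x - y) - η • gy x y, G ω - gy x y⟫) P :=
    (hGint.sub (integrable_const (gy x y))).const_inner _
  have hexp2 : (fun ω => ‖(ystar x - y) - η • (G ω)‖^2)
      = (fun ω => ‖(ystar x - y) - η • gy x y‖^2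
          - 2*(η*⟪(ystar x - y) - η • gy x y, G ω - gy x y⟫)
          + η^2*‖G ω - gy x y‖^2) := by
    funext ω
    rw [show (ystar x - y) - η • (G ω)
        = ((ystar x - y) - η • gy x y) - η • (G ω - gy x y) by module,
      norm_sub_sq_real, real_inner_smul_right, norm_smul, Real.norm_eq_abs,
      abs_of_pos hη, mul_pow]
  have hinth : Integrable (fun ω => ‖(ystar x - y) - η • (G ω)‖^2) P := by
    rw [hexp2]
    exact ((integrable_const _).sub ((hint2.const_mul η).const_mul 2)).add
      (hGvarInt.const_mul (η^2))
  have hVint : Integrable (fun ω => G ω - gy x y) P := hGint.sub (integrable_const _)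
  have hVmean : ∫ ω, (G ω - gy x y) ∂P = 0 := by
    rw [integral_sub hGint (integrable_const _), hGmean, integral_const]
    simp
  have hI0 : ∫ ω, ⟪(ystar x - y) - η • gy x y, G ω - gy x y⟫ ∂P = 0 := by
    rw [integral_inner hVint, hVmean, inner_zero_right]
  have hintval : ∫ ω, ‖(ystar x - y) - η • (G ω)‖^2 ∂P
      ≤ (1 - μ*η)*‖ystar x - y‖^2 + η^2*σ^2 := by
    have hconst : Integrable (fun _ : Ω => ‖(ystar x - y) - η • gy x y‖^2) P :=
      integrable_const _
    have hfun2 : Integrable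
        (fun ω => 2*(η*⟪(ystar x - y) - η • gy x y, G ω - gy x y⟫)) P :=
      (hint2.const_mul η).const_mul 2
    have hfun1 : Integrable
        (fun ω => ‖(ystar x - y) - η • gy x y‖^2
          - 2*(η*⟪(ystar x - y) - η • gy x y, G ω - gy x y⟫)) P := hconst.sub hfun2
    have hfun3 : Integrable (fun ω => η^2*‖G ω - gy x y‖^2) P := hGvarInt.const_mul (η^2)
    rw [hexp2, integral_add hfun1 hfun3, integral_sub hconst hfun2,
      integral_const, integral_const_mul, integral_const_mul, hI0, integral_const_mul]
    simp only [measure_univ, probReal_univ, ENNReal.toReal_one, one_smul, smul_eq_mul, mul_zero, sub_zero]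
    have h13 : η^2 * ∫ ω, ‖G ω - gy x y‖^2 ∂P ≤ η^2 * σ^2 :=
      mul_le_mul_of_nonneg_left hGvar (sq_nonneg η)
    linarith [hkey]
  refine le_trans (integral_mono_of_nonneg ?_ hinth ?_) hintval
  · filter_upwards with ω
    positivity
  · filter_upwards with ω
    have hne := proj_nonexpansive hYconv projY hproj (y + η • G ω) (hmem x)
    have e1 : ‖ystar x - projY (y + η • G ω)‖ = ‖projY (y + η • G ω) - ystar x‖ :=
      norm_sub_rev _ _
    have e2 : ‖(y + η • G ω) - ystar x‖ = ‖(ystar x - y) - η • G ω‖ := by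
      rw [show (y + η • G ω) - ystar x = -((ystar x - y) - η • G ω) by module, norm_neg]
    have h14 : ‖ystar x - projY (y + η • G ω)‖ ≤ ‖(ystar x - y) - η • G ω‖ := by
      rw [e1, ← e2]
      exact hne
    have h15 := norm_nonneg (ystar x - projY (y + η • G ω))
    nlinarith
end

section
/- Normalized descent step for a generalized-smooth function: for any x ∈ ℝⁿ, any nonzero m ∈ ℝⁿ, and any 0 < η ≤ 1/L₁, the point x⁺ := x − η m/‖m‖ satisfies Φ(x⁺) ≤ Φ(x) − η‖∇Φ(x)‖ + 2η‖m − ∇Φ(x)‖ + (η²/2)(L₀ + L₁‖∇Φ(x)‖). -/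
open scoped RealInnerProductSpace

/-- Normalized descent step for a generalized-smooth function. -/
theorem normalized_descent_step
    {n : ℕ} (hn : 0 < n)
    (Φ : EuclideanSpace ℝ (Fin n) → ℝ)
    (gradΦ : EuclideanSpace ℝ (Fin n) → EuclideanSpace ℝ (Fin n))
    (hgrad : ∀ x, HasGradientAt Φ (gradΦ x) x)
    (L0 L1 : ℝ) (hL0 : 0 ≤ L0) (hL1 : 0 ≤ L1)
    (hdesc : ∀ x x' : EuclideanSpace ℝ (Fin n), ‖x - x'‖ ≤ 1/L1 →
      Φ x' ≤ Φ x + ⟪gradΦ x, x' - x⟫ + ((L0 + L1 * ‖gradΦ x‖)/2) * ‖x - x'‖^2) :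
    ∀ (x mv : EuclideanSpace ℝ (Fin n)), mv ≠ 0 → ∀ η : ℝ, 0 < η → η ≤ 1/L1 →
      Φ (x - (η/‖mv‖) • mv) ≤
        Φ x - η * ‖gradΦ x‖ + 2 * η * ‖mv - gradΦ x‖ + (η^2/2) * (L0 + L1 * ‖gradΦ x‖) := by
  intro x mv hmv η hη hηL
  have hm : (0:ℝ) < ‖mv‖ := norm_pos_iff.mpr hmv
  set x' := x - (η/‖mv‖) • mv with hx'
  have hdiff : x - x' = (η/‖mv‖) • mv := by
    simp [hx']
  have hnorm : ‖x - x'‖ = η := by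
    rw [hdiff, norm_smul]
    rw [Real.norm_eq_abs, abs_of_pos (by positivity)]
    field_simp
  have hkey := hdesc x x' (by rw [hnorm]; exact hηL)
  have hx'x : x' - x = -((η/‖mv‖) • mv) := by
    simp [hx']
  have hinner : ⟪gradΦ x, x' - x⟫ = -(η/‖mv‖) * ⟪gradΦ x, mv⟫ := by
    rw [hx'x, inner_neg_right, real_inner_smul_right]
    ring
  have hsplit : ⟪gradΦ x, mv⟫ = ⟪mv, mv⟫ - ⟪mv - gradΦ x, mv⟫ := by
    rw [inner_sub_left]; ring
  have h1 : ⟪mv - gradΦ x, mv⟫ ≤ ‖mv - gradΦ x‖ * ‖mv‖ := real_inner_le_norm _ _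
  have h2 : ⟪mv, mv⟫ = ‖mv‖^2 := real_inner_self_eq_norm_sq mv
  have h3 : ‖gradΦ x‖ ≤ ‖mv‖ + ‖mv - gradΦ x‖ := by
    have := norm_sub_norm_le mv (gradΦ x)
    linarith [abs_le.mp (abs_norm_sub_norm_le mv (gradΦ x))]
  have hbound : ⟪gradΦ x, x' - x⟫ ≤ -η * ‖gradΦ x‖ + 2 * η * ‖mv - gradΦ x‖ := by
    rw [hinner, hsplit, h2]
    have hinv : (η/‖mv‖) * ‖mv‖ = η := by field_simp
    have : -(η/‖mv‖) * (‖mv‖^2 - ⟪mv - gradΦ x, mv⟫)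
        ≤ -η * ‖mv‖ + η * ‖mv - gradΦ x‖ := by
      have hpos : (0:ℝ) < η/‖mv‖ := by positivity
      have e1 : (η/‖mv‖) * (‖mv - gradΦ x‖ * ‖mv‖) = η * ‖mv - gradΦ x‖ := by
        field_simp
      have e2 : (η/‖mv‖) * ‖mv‖^2 = η * ‖mv‖ := by
        field_simp
      have := mul_le_mul_of_nonneg_left h1 hpos.le
      nlinarith
    nlinarith
  rw [hnorm] at hkey
  nlinarith
end

section
/- Moment bound for geometrically weighted martingale-difference sums: for any β ∈ (0,1) and any T ≥ 1, (1 − β) Σ_{t=0}^{T−1} E‖Σ_{i=0}^{t} β^{t−i} X_i‖ ≤ T √(1 − β) σ. -/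
open MeasureTheory Finset
open scoped RealInnerProductSpace

section Aux
variable {Ω : Type*} {m0 : MeasurableSpace Ω} {P : Measure Ω} [IsProbabilityMeasure P]
variable {E : Type*} [NormedAddCommGroup E] [InnerProductSpace ℝ E]

omit [IsProbabilityMeasure P] in
lemma aux_integrable_inner {f g : Ω → E} (hf : MemLp f 2 P) (hg : MemLp g 2 P) :
    Integrable (fun ω => ⟪f ω, g ω⟫) P := by
  have h := L2.integrable_inner (𝕜 := ℝ) (hf.toLp f) (hg.toLp g)
  refine h.congr ?_
  filter_upwards [hf.coeFn_toLp, hg.coeFn_toLp] with ω h1 h2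
  rw [h1, h2]

omit [InnerProductSpace ℝ E] in
lemma aux_integral_norm_le_sqrt {f : Ω → E} (hf : MemLp f 2 P) :
    ∫ ω, ‖f ω‖ ∂P ≤ Real.sqrt (∫ ω, ‖f ω‖^2 ∂P) := by
  set a := ∫ ω, ‖f ω‖ ∂P with ha
  have hi1 : Integrable (fun ω => ‖f ω‖) P := (hf.integrable one_le_two).norm
  have hi2 : Integrable (fun ω => ‖f ω‖^2) P :=
    (memLp_two_iff_integrable_sq_norm hf.1).mp hf
  have ha0 : 0 ≤ a := integral_nonneg fun ω => norm_nonneg _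
  rw [Real.le_sqrt ha0 (integral_nonneg fun ω => sq_nonneg _)]
  have key : 0 ≤ ∫ ω, (‖f ω‖ - a)^2 ∂P := integral_nonneg fun ω => sq_nonneg _
  have expand : ∫ ω, (‖f ω‖ - a)^2 ∂P = (∫ ω, ‖f ω‖^2 ∂P) - a^2 := by
    have : ∀ ω, (‖f ω‖ - a)^2 = ‖f ω‖^2 - (2*a) * ‖f ω‖ + a^2 := by intro ω; ring
    simp_rw [this]
    have i3 : Integrable (fun ω => ‖f ω‖^2 - 2*a*‖f ω‖) P := hi2.sub (hi1.const_mul _)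
    rw [integral_add i3 (integrable_const _),
      integral_sub hi2 (hi1.const_mul _), integral_const_mul, integral_const]
    simp only [measure_univ, ENNReal.toReal_one, one_smul, smul_eq_mul, probReal_univ]
    ring
  linarith [key, expand]

lemma aux_orth {n : ℕ} (ℱ : Filtration ℕ m0)
    (X : ℕ → Ω → EuclideanSpace ℝ (Fin n))
    (hmeas : ∀ i, StronglyMeasurable[ℱ (i+1)] (X i))
    (hint : ∀ i, Integrable (X i) P)
    (hmd : ∀ i, P[X i | ℱ i] =ᵐ[P] 0)
    (hL2 : ∀ i, MemLp (X i) 2 P)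
    {i j : ℕ} (hij : i < j) :
    ∫ ω, ⟪X i ω, X j ω⟫ ∂P = 0 := by
  have hle : ℱ j ≤ m0 := ℱ.le j
  haveI : SigmaFinite (P.trim hle) := by infer_instance
  have hcoord : ∀ ω, ⟪X i ω, X j ω⟫ = ∑ k : Fin n, (X i ω k) * (X j ω k) := by
    intro ω
    simp [PiLp.inner_apply, RCLike.inner_apply, conj_trivial]
    exact Finset.sum_congr rfl fun _ _ => mul_comm _ _
  simp_rw [hcoord]
  have hL2c : ∀ (l : ℕ) (k : Fin n), MemLp (fun ω => X l ω k) 2 P := by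
    intro l k
    have := MemLp.const_inner (𝕜 := ℝ) (EuclideanSpace.single k (1:ℝ)) (hL2 l)
    simpa [EuclideanSpace.inner_single_left] using this
  have hintprod : ∀ k : Fin n, Integrable (fun ω => X i ω k * X j ω k) P := by
    intro k
    simpa [RCLike.inner_apply, conj_trivial, mul_comm] using
      aux_integrable_inner (E := ℝ) (hL2c i k) (hL2c j k)
  rw [integral_finset_sum _ (fun k _ => hintprod k)]
  refine Finset.sum_eq_zero fun k _ => ?_
  set f := fun ω => X i ω k
  set g := fun ω => X j ω k
  have hgint : Integrable g P := (hL2c j k).integrable one_le_two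
  have hg0 : (0 : Ω → ℝ) =ᵐ[P] P[g | ℱ j] := by
    refine ae_eq_condExp_of_forall_setIntegral_eq hle hgint
      (fun s _ _ => (integrable_zero _ _ _).integrableOn)
      (fun s hs hμs => ?_)
      (aestronglyMeasurable_const)
    have hXj0 : ∫ ω in s, X j ω ∂P = 0 := by
      rw [← setIntegral_condExp hle (hint j) hs]
      rw [setIntegral_congr_ae (hle s hs) ((hmd j).mono fun ω hω _ => hω)]
      simp
    have : ∫ ω in s, g ω ∂P = (EuclideanSpace.proj k : EuclideanSpace ℝ (Fin n) →L[ℝ] ℝ)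
        (∫ ω in s, X j ω ∂P) := by
      rw [← ContinuousLinearMap.integral_comp_comm _ ((hint j).integrableOn)]
      rfl
    simp only [Pi.zero_apply, integral_zero]
    rw [this, hXj0]
    simp
  have hfm : StronglyMeasurable[ℱ j] f := by
    have h1 : StronglyMeasurable[ℱ (i+1)] f :=
      ((EuclideanSpace.proj k :
        EuclideanSpace ℝ (Fin n) →L[ℝ] ℝ).continuous).comp_stronglyMeasurable (hmeas i)
    exact h1.mono (ℱ.mono hij)
  have hpull : P[fun ω => f ω * g ω | ℱ j] =ᵐ[P] f * P[g | ℱ j] :=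
    condExp_mul_of_stronglyMeasurable_left hfm (hintprod k) hgint
  have hz : P[fun ω => f ω * g ω | ℱ j] =ᵐ[P] 0 := by
    filter_upwards [hpull, hg0.symm] with ω h1 h2
    simp [h1, h2]
  calc ∫ ω, f ω * g ω ∂P = ∫ ω, (P[fun ω => f ω * g ω | ℱ j]) ω ∂P :=
        (integral_condExp hle).symm
    _ = 0 := by rw [integral_congr_ae hz]; simp

end Aux

/-- Moment bound for geometrically weighted martingale-difference sums. -/
theorem geometric_weighted_mds_moment_bound
    {n : ℕ} (hn : 0 < n)
    {Ω : Type*} {m0 : MeasurableSpace Ω}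
    (P : Measure Ω) [IsProbabilityMeasure P]
    (ℱ : Filtration ℕ m0)
    (X : ℕ → Ω → EuclideanSpace ℝ (Fin n))
    (σ : ℝ) (hσ : 0 ≤ σ)
    (hmeas : ∀ i, StronglyMeasurable[ℱ (i+1)] (X i))
    (hint : ∀ i, Integrable (X i) P)
    (hmd : ∀ i, P[X i | ℱ i] =ᵐ[P] 0)
    (hsqint : ∀ i, Integrable (fun ω => ‖X i ω‖^2) P)
    (hvar : ∀ i, ∫ ω, ‖X i ω‖^2 ∂P ≤ σ^2)
    (β : ℝ) (hβ : β ∈ Set.Ioo (0:ℝ) 1) :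
    ∀ T : ℕ, 1 ≤ T →
      (1 - β) * ∑ t ∈ Finset.range T,
          ∫ ω, ‖∑ i ∈ Finset.range (t+1), β^(t-i) • X i ω‖ ∂P
        ≤ T * Real.sqrt (1 - β) * σ := by
  obtain ⟨hβ0, hβ1⟩ := hβ
  have h1β : 0 < 1 - β := by linarith
  set r := Real.sqrt (1 - β) with hr
  have hr0 : 0 < r := Real.sqrt_pos.mpr h1β
  have hrr : r * r = 1 - β := Real.mul_self_sqrt h1β.le
  have hL2 : ∀ i, MemLp (X i) 2 P :=
    fun i => (memLp_two_iff_integrable_sq_norm (hint i).1).mpr (hsqint i)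
  -- per-t bound
  have hSbound : ∀ t : ℕ,
      ∫ ω, ‖∑ i ∈ Finset.range (t+1), β^(t-i) • X i ω‖ ∂P ≤ σ / r := by
    intro t
    set S := fun ω => ∑ i ∈ Finset.range (t+1), β^(t-i) • X i ω with hS
    have hSL2 : MemLp S 2 P :=
      memLp_finsetSum _ (fun i _ => (hL2 i).const_smul (β^(t-i)))
    have hprod : ∀ i j : ℕ, Integrable (fun ω => ⟪X i ω, X j ω⟫) P :=
      fun i j => aux_integrable_inner (hL2 i) (hL2 j)
    have expand : ∀ ω, ‖S ω‖^2 = ∑ i ∈ Finset.range (t+1), ∑ j ∈ Finset.range (t+1),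
        (β^(t-i) * β^(t-j)) * ⟪X i ω, X j ω⟫ := by
      intro ω
      rw [← real_inner_self_eq_norm_sq, hS]
      simp_rw [sum_inner, inner_sum, real_inner_smul_left, real_inner_smul_right]
      congr 1; ext i; congr 1; ext j; ring
    have hint2 : ∫ ω, ‖S ω‖^2 ∂P = ∑ i ∈ Finset.range (t+1), ∑ j ∈ Finset.range (t+1),
        (β^(t-i) * β^(t-j)) * ∫ ω, ⟪X i ω, X j ω⟫ ∂P := by
      simp_rw [expand]
      rw [integral_finset_sum _ (fun i _ => integrable_finset_sum _
        (fun j _ => (hprod i j).const_mul _))]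
      refine Finset.sum_congr rfl fun i _ => ?_
      rw [integral_finset_sum _ (fun j _ => (hprod i j).const_mul _)]
      exact Finset.sum_congr rfl fun j _ => integral_const_mul _ _
    have hdiag : ∀ i ∈ Finset.range (t+1),
        ∑ j ∈ Finset.range (t+1), (β^(t-i) * β^(t-j)) * ∫ ω, ⟪X i ω, X j ω⟫ ∂P
        = (β^(t-i))^2 * ∫ ω, ‖X i ω‖^2 ∂P := by
      intro i hi
      rw [Finset.sum_eq_single i]
      · simp only [real_inner_self_eq_norm_sq]
        try ring
      · intro j _ hji
        rcases lt_or_gt_of_ne (Ne.symm hji) with h | h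
        · rw [aux_orth ℱ X hmeas hint hmd hL2 h, mul_zero]
        · have : ∫ ω, ⟪X i ω, X j ω⟫ ∂P = 0 := by
            have := aux_orth ℱ X hmeas hint hmd hL2 h
            rw [← this]
            exact integral_congr_ae (Filter.Eventually.of_forall fun ω => real_inner_comm _ _)
          rw [this, mul_zero]
      · intro hii; exact absurd hi hii
    have hsum2 : ∫ ω, ‖S ω‖^2 ∂P ≤ σ^2 * (1 - β)⁻¹ := by
      rw [hint2, Finset.sum_congr rfl hdiag]
      have step1 : ∑ i ∈ Finset.range (t+1), (β^(t-i))^2 * ∫ ω, ‖X i ω‖^2 ∂P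
          ≤ ∑ i ∈ Finset.range (t+1), (β^(t-i))^2 * σ^2 := by
        refine Finset.sum_le_sum fun i _ => ?_
        exact mul_le_mul_of_nonneg_left (hvar i) (sq_nonneg _)
      have hb2 : β^2 < 1 := by nlinarith
      have hb2' : 0 ≤ β^2 := sq_nonneg β
      have step2 : ∑ i ∈ Finset.range (t+1), (β^(t-i))^2 ≤ (1 - β)⁻¹ := by
        have hre : ∑ i ∈ Finset.range (t+1), (β^(t-i))^2
            = ∑ i ∈ Finset.range (t+1), (β^2)^i := by
          rw [← Finset.sum_range_reflect (fun i => (β^2)^i) (t+1)]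
          refine Finset.sum_congr rfl fun i hi => ?_
          rw [← pow_mul, ← pow_mul']
          congr 1
          try omega
        rw [hre]
        have h1 : ∑ i ∈ Finset.range (t+1), (β^2)^i ≤ (1 - β^2)⁻¹ := by
          have hs := summable_geometric_of_lt_one hb2' hb2
          have := Summable.sum_le_tsum (Finset.range (t+1))
            (fun j _ => pow_nonneg hb2' j) hs
          rwa [tsum_geometric_of_lt_one hb2' hb2] at this
        have h2 : (1 - β^2)⁻¹ ≤ (1 - β)⁻¹ := by
          apply inv_anti₀ h1β
          nlinarith
        linarith
      calc ∑ i ∈ Finset.range (t+1), (β^(t-i))^2 * ∫ ω, ‖X i ω‖^2 ∂P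
          ≤ ∑ i ∈ Finset.range (t+1), (β^(t-i))^2 * σ^2 := step1
        _ = (∑ i ∈ Finset.range (t+1), (β^(t-i))^2) * σ^2 := by
            rw [Finset.sum_mul]
        _ ≤ (1 - β)⁻¹ * σ^2 := by
            exact mul_le_mul_of_nonneg_right step2 (sq_nonneg σ)
        _ = σ^2 * (1 - β)⁻¹ := by ring
    calc ∫ ω, ‖S ω‖ ∂P ≤ Real.sqrt (∫ ω, ‖S ω‖^2 ∂P) := aux_integral_norm_le_sqrt hSL2
      _ ≤ Real.sqrt (σ^2 * (1 - β)⁻¹) := Real.sqrt_le_sqrt hsum2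
      _ = σ / r := by
          rw [Real.sqrt_mul (sq_nonneg σ), Real.sqrt_sq hσ, Real.sqrt_inv, ← hr,
            div_eq_mul_inv]
  intro T hT
  have hsumT : ∑ t ∈ Finset.range T,
      ∫ ω, ‖∑ i ∈ Finset.range (t+1), β^(t-i) • X i ω‖ ∂P ≤ T * (σ / r) := by
    calc ∑ t ∈ Finset.range T, ∫ ω, ‖∑ i ∈ Finset.range (t+1), β^(t-i) • X i ω‖ ∂P
        ≤ ∑ _t ∈ Finset.range T, (σ / r) := Finset.sum_le_sum fun t _ => hSbound t
      _ = T * (σ / r) := by rw [Finset.sum_const, Finset.card_range, nsmul_eq_mul]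
  have hkey : (1 - β) * ((T : ℝ) * (σ / r)) = T * r * σ := by
    rw [← hrr]
    field_simp
  calc (1 - β) * ∑ t ∈ Finset.range T,
        ∫ ω, ‖∑ i ∈ Finset.range (t+1), β^(t-i) • X i ω‖ ∂P
      ≤ (1 - β) * (T * (σ / r)) := by
        exact mul_le_mul_of_nonneg_left hsumT h1β.le
    _ = T * r * σ := hkey
end

section
/- High-probability maximal bound for bounded martingale difference sequences in a Hilbert space: suppose X_1, …, X_T is a martingale difference sequence adapted to a filtration F_1, …, F_T with values in a Hilbert space such that ‖X_t‖ ≤ R_t almost surely for constants R_t ≥ 0. Then for any δ ∈ (0,1), with probability at least 1 − δ, for all t ∈ {1,…,T} one has ‖Σ_{s=1}^{t} X_s‖ ≤ 4 √(log(2/δ) Σ_{s=1}^{T} R_s²). -/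
open MeasureTheory Real Filter Topology


lemma aux_sinh_le_mul_cosh {x : ℝ} (hx : 0 ≤ x) : Real.sinh x ≤ x * Real.cosh x := by
  have hmono : MonotoneOn (fun y : ℝ => y * Real.cosh y - Real.sinh y) (Set.Ici 0) := by
    have hd : ∀ y : ℝ, HasDerivAt (fun y : ℝ => y * Real.cosh y - Real.sinh y)
        (y * Real.sinh y) y := by
      intro y
      have h := ((hasDerivAt_id y).mul (Real.hasDerivAt_cosh y)).sub (Real.hasDerivAt_sinh y)
      exact h.congr_deriv (by simp only [id_eq]; ring)
    refine monotoneOn_of_deriv_nonneg (convex_Ici 0) ?_ ?_ ?_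
    · exact (Continuous.sub (continuous_id.mul Real.continuous_cosh) Real.continuous_sinh).continuousOn
    · intro y _; exact (hd y).differentiableAt.differentiableWithinAt
    · intro y hy
      rw [interior_Ici] at hy
      rw [(hd y).deriv]
      exact mul_nonneg hy.le (by simpa using Real.sinh_nonneg_iff.2 hy.le)
  have h0 := hmono (Set.self_mem_Ici) (Set.mem_Ici.2 hx) hx
  simp only [Real.sinh_zero, Real.cosh_zero, mul_one, zero_mul, sub_zero, zero_sub, neg_zero] at h0
  linarith

lemma aux_mul_sinh {a b : ℝ} (ha : 0 ≤ a) (hab : a ≤ b) :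
    b * Real.sinh a ≤ a * Real.sinh b := by
  have hc : 0 ≤ b - a := by linarith
  have h1 : Real.sinh b = Real.sinh a * Real.cosh (b - a) + Real.cosh a * Real.sinh (b - a) := by
    have := Real.sinh_add a (b - a); simpa using this
  have h2 : Real.sinh a ≤ a * Real.cosh a := aux_sinh_le_mul_cosh ha
  have h3 : (b - a) ≤ Real.sinh (b - a) := by simpa using Real.self_le_sinh_iff.2 hc
  have h4 : (1 : ℝ) ≤ Real.cosh (b - a) := Real.one_le_cosh _
  have h5 : 0 ≤ Real.sinh a := Real.sinh_nonneg_iff.2 ha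
  have h6 : 0 ≤ Real.sinh (b - a) := Real.sinh_nonneg_iff.2 hc
  nlinarith [mul_nonneg h5 hc, mul_nonneg ha h5]

lemma aux_cosh_le_exp_half_sq (x : ℝ) (hx : 0 ≤ x) : Real.cosh x ≤ Real.exp (x ^ 2 / 2) := by
  have hmono : MonotoneOn (fun y : ℝ => y ^ 2 / 2 - Real.log (Real.cosh y)) (Set.Ici 0) := by
    have hd : ∀ y : ℝ, HasDerivAt (fun y : ℝ => y ^ 2 / 2 - Real.log (Real.cosh y))
        (y - Real.sinh y / Real.cosh y) y := by
      intro y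
      have h1 : HasDerivAt (fun y : ℝ => y ^ 2 / 2) y y := by
        have := (hasDerivAt_pow 2 y).div_const 2
        exact this.congr_deriv (by push_cast; ring)
      have h2 : HasDerivAt (fun y : ℝ => Real.log (Real.cosh y))
          (Real.sinh y / Real.cosh y) y := (Real.hasDerivAt_cosh y).log (Real.cosh_pos y).ne'
      exact h1.sub h2
    refine monotoneOn_of_deriv_nonneg (convex_Ici 0) ?_ ?_ ?_
    · exact ((continuous_pow 2).div_const 2).continuousOn.sub
        ((Real.continuous_cosh.log (fun y => (Real.cosh_pos y).ne')).continuousOn)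
    · intro y _; exact (hd y).differentiableAt.differentiableWithinAt
    · intro y hy
      rw [interior_Ici] at hy
      rw [(hd y).deriv, sub_nonneg, div_le_iff₀ (Real.cosh_pos y)]
      exact aux_sinh_le_mul_cosh hy.le
  have h0 := hmono (Set.self_mem_Ici) (Set.mem_Ici.2 hx) hx
  simp only [Real.cosh_zero, Real.log_one, zero_pow, ne_eq, OfNat.ofNat_ne_zero,
    not_false_eq_true, zero_div, sub_zero, zero_sub, neg_zero] at h0
  have : Real.log (Real.cosh x) ≤ x ^ 2 / 2 := by linarith
  calc Real.cosh x = Real.exp (Real.log (Real.cosh x)) := (Real.exp_log (Real.cosh_pos x)).symm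
    _ ≤ Real.exp (x ^ 2 / 2) := Real.exp_le_exp.2 this

lemma aux_exp_le_two_mul_cosh (x : ℝ) : Real.exp x ≤ 2 * Real.cosh x := by
  rw [Real.cosh_eq]; have := Real.exp_pos (-x); linarith

lemma aux_convexOn {l : ℝ} (hl : 0 ≤ l) :
    ConvexOn ℝ (Set.Ici 0) (fun u : ℝ => Real.cosh (l * Real.sqrt u)) := by
  have hderiv : ∀ u : ℝ, 0 < u → HasDerivAt (fun u : ℝ => Real.cosh (l * Real.sqrt u))
      (Real.sinh (l * Real.sqrt u) * (l * (1 / (2 * Real.sqrt u)))) u := by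
    intro u hu
    have hsq : HasDerivAt Real.sqrt (1 / (2 * Real.sqrt u)) u := Real.hasDerivAt_sqrt hu.ne'
    exact (Real.hasDerivAt_cosh (l * Real.sqrt u)).comp u (hsq.const_mul l)
  refine MonotoneOn.convexOn_of_deriv (convex_Ici 0) ?_ ?_ ?_
  · exact (Real.continuous_cosh.comp (continuous_const.mul Real.continuous_sqrt)).continuousOn
  · rw [interior_Ici]
    intro u hu
    exact (hderiv u hu).differentiableAt.differentiableWithinAt
  · rw [interior_Ici]
    intro u hu v hv huv
    rw [(hderiv u hu).deriv, (hderiv v hv).deriv]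
    have hsu : 0 < Real.sqrt u := Real.sqrt_pos.2 hu
    have hsv : 0 < Real.sqrt v := Real.sqrt_pos.2 hv
    have hs : Real.sqrt u ≤ Real.sqrt v := Real.sqrt_le_sqrt huv
    have key := aux_mul_sinh (mul_nonneg hl (Real.sqrt_nonneg u))
      (mul_le_mul_of_nonneg_left hs hl)
    -- key : (l * √v) * sinh (l * √u) ≤ (l * √u) * sinh (l * √v)
    rcases eq_or_lt_of_le hl with h0 | hl'
    · simp [← h0]
    have key' : l * (Real.sqrt v * Real.sinh (l * Real.sqrt u))
        ≤ l * (Real.sqrt u * Real.sinh (l * Real.sqrt v)) := by linarith [key]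
    have h1 := le_of_mul_le_mul_left key' hl'
    have h2 : Real.sinh (l * Real.sqrt u) / (2 * Real.sqrt u)
        ≤ Real.sinh (l * Real.sqrt v) / (2 * Real.sqrt v) := by
      rw [div_le_div_iff₀ (by positivity) (by positivity)]
      nlinarith [h1]
    calc Real.sinh (l * Real.sqrt u) * (l * (1 / (2 * Real.sqrt u)))
        = l * (Real.sinh (l * Real.sqrt u) / (2 * Real.sqrt u)) := by ring
      _ ≤ l * (Real.sinh (l * Real.sqrt v) / (2 * Real.sqrt v)) :=
          mul_le_mul_of_nonneg_left h2 hl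
      _ = Real.sinh (l * Real.sqrt v) * (l * (1 / (2 * Real.sqrt v))) := by ring

lemma aux_chord {f : ℝ → ℝ} (hf : ConvexOn ℝ (Set.Ici 0) f) {p q u : ℝ}
    (hp : 0 ≤ p) (hpu : p ≤ u) (huq : u ≤ q) (hpq : p < q) :
    f u ≤ f p + (f q - f p) / (q - p) * (u - p) := by
  have hq : (0:ℝ) ≤ q := le_trans (le_trans hp hpu) huq
  have hqp : 0 < q - p := by linarith
  have hts : (q - u) / (q - p) + (u - p) / (q - p) = 1 := by field_simp; ring
  have h := hf.2 (Set.mem_Ici.2 hp) (Set.mem_Ici.2 hq)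
    (div_nonneg (by linarith) hqp.le) (div_nonneg (by linarith) hqp.le) hts
  have harg : ((q - u) / (q - p)) • p + ((u - p) / (q - p)) • q = u := by
    simp only [smul_eq_mul]; field_simp; ring
  rw [harg] at h
  have heq : ((q - u) / (q - p)) • f p + ((u - p) / (q - p)) • f q
      = f p + (f q - f p) / (q - p) * (u - p) := by
    simp only [smul_eq_mul]; field_simp; ring
  linarith [h, heq.le]

lemma aux_orth_s13 {H : Type*} [NormedAddCommGroup H] [InnerProductSpace ℝ H] [CompleteSpace H]
    {Ω : Type*} {m0 : MeasurableSpace Ω} (P : Measure Ω) [IsProbabilityMeasure P]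
    {m : MeasurableSpace Ω} (hm : m ≤ m0)
    {Y : Ω → H} (hYint : Integrable Y P) (hmd : P[Y|m] =ᵐ[P] 0)
    {G : Ω → H} (hG : StronglyMeasurable[m] G) {C : ℝ}
    (hGb : ∀ᵐ ω ∂P, ‖G ω‖ ≤ C) :
    ∫ ω, (inner ℝ (G ω) (Y ω) : ℝ) ∂P = 0 := by
  haveI : SigmaFinite (P.trim hm) := by infer_instance
  -- integrability of inner products with simple functions
  have hint : ∀ g : @SimpleFunc Ω m H, Integrable (fun ω => (inner ℝ (g ω) (Y ω) : ℝ)) P := by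
    intro g
    obtain ⟨C', hC'⟩ := (@SimpleFunc.exists_forall_norm_le Ω H m _ g)
    refine Integrable.mono' (hYint.norm.const_mul C') ?_ ?_
    · exact AEStronglyMeasurable.inner
        ((g.stronglyMeasurable.mono hm).aestronglyMeasurable) hYint.1
    · filter_upwards with ω
      calc ‖(inner ℝ (g ω) (Y ω) : ℝ)‖ ≤ ‖g ω‖ * ‖Y ω‖ := norm_inner_le_norm _ _
        _ ≤ C' * ‖Y ω‖ := by
            have := hC' ω
            have h0 : 0 ≤ ‖Y ω‖ := norm_nonneg _
            nlinarith
  have hsimple : ∀ g : @SimpleFunc Ω m H, ∫ ω, (inner ℝ (g ω) (Y ω) : ℝ) ∂P = 0 := by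
    intro g
    refine @SimpleFunc.induction Ω H m _
      (fun g => ∫ ω, (inner ℝ (g ω) (Y ω) : ℝ) ∂P = 0) ?_ ?_ g
    · intro c s hs
      have heq : (fun ω => (inner ℝ ((SimpleFunc.piecewise s hs (SimpleFunc.const Ω c)
          (SimpleFunc.const Ω (0:H))) ω) (Y ω) : ℝ))
          = s.indicator (fun ω => (inner ℝ c (Y ω) : ℝ)) := by
        classical
        funext ω
        rw [Set.indicator_apply]
        by_cases hω : ω ∈ s
        · simp [SimpleFunc.piecewise_apply, hω]
        · simp [SimpleFunc.piecewise_apply, hω]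
      have h2 : ∫ ω, s.indicator (fun ω => (inner ℝ c (Y ω) : ℝ)) ω ∂P
          = ∫ ω in s, (inner ℝ c (Y ω) : ℝ) ∂P :=
        @integral_indicator Ω ℝ m0 _ _ (fun ω => (inner ℝ c (Y ω) : ℝ)) s P (hm s hs)
      rw [heq]
      rw [show (integral P (s.indicator fun ω => (inner ℝ c (Y ω) : ℝ))) =
        ∫ ω, s.indicator (fun ω => (inner ℝ c (Y ω) : ℝ)) ω ∂P from rfl, h2]
      rw [integral_inner (hYint.restrict (s := s)) c]
      have h1 : ∫ ω in s, Y ω ∂P = 0 := by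
        rw [← setIntegral_condExp hm hYint hs]
        have h3 : ∫ x in s, (P[Y|m]) x ∂P = ∫ x in s, (0 : Ω → H) x ∂P :=
          integral_congr_ae (ae_restrict_of_ae hmd)
        simpa using h3
      rw [h1, inner_zero_right]
    · intro f g _ hf hg
      have : (fun ω => (inner ℝ ((f + g) ω) (Y ω) : ℝ))
          = fun ω => (inner ℝ (f ω) (Y ω) : ℝ) + (inner ℝ (g ω) (Y ω) : ℝ) := by
        funext ω
        simp [inner_add_left]
      rw [this, integral_add (hint f) (hint g), hf, hg, add_zero]
  -- approximate G by bounded simple functions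
  set C' : ℝ := max C 0 with hC'
  have hGb' : ∀ᵐ ω ∂P, ‖G ω‖ ≤ C' := by
    filter_upwards [hGb] with ω h using le_trans h (le_max_left _ _)
  have hC'0 : 0 ≤ C' := le_max_right _ _
  set Gn : ℕ → @SimpleFunc Ω m H := fun n => hG.approxBounded C' n with hGn
  have hlim : ∀ᵐ ω ∂P, Tendsto (fun n => (inner ℝ ((Gn n) ω) (Y ω) : ℝ)) atTop
      (𝓝 (inner ℝ (G ω) (Y ω) : ℝ)) := by
    filter_upwards [hGb'] with ω h
    exact Filter.Tendsto.inner (hG.tendsto_approxBounded_of_norm_le h) tendsto_const_nhds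
  have htendint : Tendsto (fun n => ∫ ω, (inner ℝ ((Gn n) ω) (Y ω) : ℝ) ∂P) atTop
      (𝓝 (∫ ω, (inner ℝ (G ω) (Y ω) : ℝ) ∂P)) := by
    refine tendsto_integral_of_dominated_convergence (fun ω => C' * ‖Y ω‖)
      (fun n => AEStronglyMeasurable.inner
        (((Gn n).stronglyMeasurable.mono hm).aestronglyMeasurable) hYint.1)
      (hYint.norm.const_mul C') ?_ hlim
    intro n
    filter_upwards with ω
    calc ‖(inner ℝ ((Gn n) ω) (Y ω) : ℝ)‖ ≤ ‖(Gn n) ω‖ * ‖Y ω‖ := norm_inner_le_norm _ _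
      _ ≤ C' * ‖Y ω‖ := by
          have := hG.norm_approxBounded_le hC'0 n ω
          have h0 : 0 ≤ ‖Y ω‖ := norm_nonneg _
          nlinarith
  have : Tendsto (fun _ : ℕ => (0:ℝ)) atTop (𝓝 (∫ ω, (inner ℝ (G ω) (Y ω) : ℝ) ∂P)) := by
    simpa [fun n => hsimple (Gn n)] using htendint
  exact (tendsto_nhds_unique tendsto_const_nhds this).symm

lemma aux_cosh_le {x y : ℝ} (h : |x| ≤ y) : Real.cosh x ≤ Real.cosh y :=
  Real.cosh_le_cosh.2 (by rw [abs_of_nonneg ((abs_nonneg x).trans h)]; exact h)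

section step
variable {H : Type*} [NormedAddCommGroup H] [InnerProductSpace ℝ H] [CompleteSpace H]
  {Ω : Type*} {m0 : MeasurableSpace Ω}


set_option maxHeartbeats 1000000 in
lemma aux_step (P : Measure Ω) [IsProbabilityMeasure P]
    {m : MeasurableSpace Ω} (hm : m ≤ m0)
    (W Y : Ω → H) (ε : Ω → ℝ) (l R K : ℝ) (hl : 0 < l) (hRpos : 0 < R) (hK : 0 ≤ K)
    (hW : StronglyMeasurable[m] W) (hWb : ∀ᵐ ω ∂P, ‖W ω‖ ≤ K)
    (hε : StronglyMeasurable[m] ε) (hε01 : ∀ ω, ε ω = 0 ∨ ε ω = 1)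
    (hYint : Integrable Y P) (hYb : ∀ᵐ ω ∂P, ‖Y ω‖ ≤ R)
    (hmd : P[Y|m] =ᵐ[P] 0) :
    ∫ ω, Real.cosh (l * ‖W ω + ε ω • Y ω‖) ∂P
      ≤ Real.cosh (2*l*R) * ∫ ω, Real.cosh (l * ‖W ω‖) ∂P := by
  classical
  set κ : Ω → ℝ := fun ω => if R ≤ ‖W ω‖ then
      (Real.cosh (l*(‖W ω‖+R)) - Real.cosh (l*(‖W ω‖-R)))/(4*‖W ω‖*R) else 0 with hκdef
  set β : Ω → ℝ := fun ω => if R ≤ ‖W ω‖ then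
      Real.cosh (l*(‖W ω‖-R)) + κ ω * (‖W ω‖^2 - (‖W ω‖-R)^2)
    else Real.cosh (l*‖W ω‖) * Real.cosh (2*l*R) with hβdef
  set Cm : ℝ := Real.cosh (l*(K+R)) / (4*R*R) with hCmdef
  have hCm0 : 0 ≤ Cm := by positivity
  have hκ0 : ∀ ω, 0 ≤ κ ω := by
    intro ω
    simp only [hκdef]
    by_cases hc : R ≤ ‖W ω‖
    · rw [if_pos hc]
      have h1 : Real.cosh (l*(‖W ω‖-R)) ≤ Real.cosh (l*(‖W ω‖+R)) := by
        apply aux_cosh_le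
        rw [abs_mul, abs_of_nonneg hl.le, abs_of_nonneg (by linarith : (0:ℝ) ≤ ‖W ω‖ - R)]
        nlinarith [norm_nonneg (W ω)]
      have h2 : (0:ℝ) < 4*‖W ω‖*R := by nlinarith [norm_nonneg (W ω)]
      exact div_nonneg (by linarith) h2.le
    · rw [if_neg hc]
  have hκb : ∀ ω, ‖W ω‖ ≤ K → κ ω ≤ Cm := by
    intro ω hωK
    simp only [hκdef]
    by_cases hc : R ≤ ‖W ω‖
    · rw [if_pos hc]
      have h2 : Real.cosh (l*(‖W ω‖+R)) ≤ Real.cosh (l*(K+R)) := by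
        apply aux_cosh_le
        rw [abs_mul, abs_of_nonneg hl.le, abs_of_nonneg (by positivity : (0:ℝ) ≤ ‖W ω‖ + R)]
        nlinarith
      have h3 := Real.one_le_cosh (l*(‖W ω‖-R))
      have h1 : Real.cosh (l*(‖W ω‖+R)) - Real.cosh (l*(‖W ω‖-R)) ≤ Real.cosh (l*(K+R)) := by
        linarith
      have h4 : 4*R*R ≤ 4*‖W ω‖*R := by nlinarith
      rw [hCmdef]
      exact div_le_div₀ (by positivity) h1 (by positivity) h4
    · rw [if_neg hc]; positivity
  have hκCb : ∀ᵐ ω ∂P, |κ ω| ≤ Cm := by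
    filter_upwards [hWb] with ω h
    rw [abs_of_nonneg (hκ0 ω)]; exact hκb ω h
  -- measurability
  have hnm : Measurable[m] (fun ω => ‖W ω‖) := hW.norm.measurable
  have hcoshp : Measurable[m] (fun ω => Real.cosh (l*(‖W ω‖+R))) :=
    Real.continuous_cosh.measurable.comp ((hnm.add_const R).const_mul l)
  have hcoshm : Measurable[m] (fun ω => Real.cosh (l*(‖W ω‖-R))) := by
    simpa [sub_eq_add_neg, Function.comp_def] using
      (Real.continuous_cosh.measurable.comp ((hnm.add_const (-R)).const_mul l))
  have hκm : Measurable[m] κ := by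
    simp only [hκdef]
    exact Measurable.ite (measurableSet_le measurable_const hnm)
      ((hcoshp.sub hcoshm).div ((hnm.const_mul 4).mul_const R)) measurable_const
  have hβm : Measurable[m] β := by
    simp only [hβdef]
    refine Measurable.ite (measurableSet_le measurable_const hnm) ?_ ?_
    · exact hcoshm.add (hκm.mul ((hnm.pow_const 2).sub ((hnm.sub_const R).pow_const 2)))
    · exact (Real.continuous_cosh.measurable.comp (hnm.const_mul l)).mul_const _
  have hWa : AEStronglyMeasurable[m0] W P := (hW.mono hm).aestronglyMeasurable
  have hεa : AEStronglyMeasurable[m0] ε P := (hε.mono hm).aestronglyMeasurable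
  have hWεY : AEStronglyMeasurable[m0] (fun ω => W ω + ε ω • Y ω) P :=
    hWa.add (hεa.smul hYint.1)
  have hf1m : AEStronglyMeasurable[m0] (fun ω => Real.cosh (l * ‖W ω + ε ω • Y ω‖)) P :=
    Real.continuous_cosh.comp_aestronglyMeasurable (hWεY.norm.const_mul l)
  have hκam : AEStronglyMeasurable[m0] κ P :=
    (hκm.stronglyMeasurable.mono hm).aestronglyMeasurable
  have hβam : AEStronglyMeasurable[m0] β P :=
    (hβm.stronglyMeasurable.mono hm).aestronglyMeasurable
  have hεYb : ∀ᵐ ω ∂P, ‖ε ω • Y ω‖ ≤ R := by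
    filter_upwards [hYb] with ω hY
    rcases hε01 ω with h | h
    · simp [h]; positivity
    · simpa [h] using hY
  have hinnb : ∀ᵐ ω ∂P, |(inner ℝ (W ω) (ε ω • Y ω) : ℝ)| ≤ K * R := by
    filter_upwards [hWb, hεYb] with ω h1 h2
    calc |(inner ℝ (W ω) (ε ω • Y ω) : ℝ)| ≤ ‖W ω‖ * ‖ε ω • Y ω‖ := abs_real_inner_le_norm _ _
      _ ≤ K * R := by nlinarith [norm_nonneg (W ω), norm_nonneg (ε ω • Y ω)]
  -- integrability
  have hf1int : Integrable (fun ω => Real.cosh (l * ‖W ω + ε ω • Y ω‖)) P := by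
    refine Integrable.mono' (integrable_const (Real.cosh (l*(K+R)))) hf1m ?_
    filter_upwards [hWb, hεYb] with ω h1 h2
    rw [Real.norm_eq_abs, abs_of_nonneg (Real.cosh_pos _).le]
    apply aux_cosh_le
    rw [abs_mul, abs_of_nonneg hl.le, abs_of_nonneg (norm_nonneg _)]
    have := norm_add_le (W ω) (ε ω • Y ω)
    nlinarith
  have hβb : ∀ᵐ ω ∂P, ‖β ω‖ ≤ Real.cosh (l*(K+R)) + Cm * (2*K*R) +
      Real.cosh (l*K) * Real.cosh (2*l*R) := by
    filter_upwards [hWb] with ω hωK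
    have hn0 : (0:ℝ) ≤ ‖W ω‖ := norm_nonneg _
    rw [Real.norm_eq_abs]
    simp only [hβdef]
    by_cases hc : R ≤ ‖W ω‖
    · rw [if_pos hc]
      have h1 : Real.cosh (l*(‖W ω‖-R)) ≤ Real.cosh (l*(K+R)) := by
        apply aux_cosh_le
        rw [abs_mul, abs_of_nonneg hl.le, abs_of_nonneg (by linarith)]
        nlinarith
      have h3 : 0 ≤ ‖W ω‖^2 - (‖W ω‖-R)^2 := by nlinarith
      have h4 : ‖W ω‖^2 - (‖W ω‖-R)^2 ≤ 2*K*R := by nlinarith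
      have h5 : κ ω * (‖W ω‖^2 - (‖W ω‖-R)^2) ≤ Cm * (2*K*R) :=
        mul_le_mul (hκb ω hωK) h4 h3 hCm0
      have h6 : 0 ≤ κ ω * (‖W ω‖^2 - (‖W ω‖-R)^2) := mul_nonneg (hκ0 ω) h3
      rw [abs_of_nonneg (add_nonneg (Real.cosh_pos _).le h6)]
      linarith [mul_pos (Real.cosh_pos (l*K)) (Real.cosh_pos (2*l*R))]
    · rw [if_neg hc]
      have h1 : Real.cosh (l*‖W ω‖) ≤ Real.cosh (l*K) := by
        apply aux_cosh_le
        rw [abs_mul, abs_of_nonneg hl.le, abs_of_nonneg hn0]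
        nlinarith
      rw [abs_of_nonneg (mul_pos (Real.cosh_pos _) (Real.cosh_pos _)).le]
      have h7 := mul_le_mul_of_nonneg_right h1 (Real.cosh_pos (2*l*R)).le
      linarith [Real.cosh_pos (l*(K+R)), mul_nonneg hCm0
        (by nlinarith : (0:ℝ) ≤ 2*K*R)]
  have hβint : Integrable β P := by
    refine Integrable.mono' (integrable_const _) hβam hβb
  have hinnm : AEStronglyMeasurable[m0] (fun ω => (inner ℝ (W ω) (ε ω • Y ω) : ℝ)) P :=
    hWa.inner (hεa.smul hYint.1)
  have hh2int : Integrable (fun ω => κ ω * (2 * (inner ℝ (W ω) (ε ω • Y ω) : ℝ))) P := by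
    refine Integrable.mono' (integrable_const (Cm * (2 * (K*R))))
      (hκam.mul (hinnm.const_mul 2)) ?_
    filter_upwards [hκCb, hinnb] with ω h1 h2
    rw [Real.norm_eq_abs, abs_mul, abs_mul, abs_two]
    have h0 : (0:ℝ) ≤ |κ ω| := abs_nonneg _
    have := mul_le_mul h1 h2 (abs_nonneg _) hCm0
    nlinarith [abs_nonneg (inner ℝ (W ω) (ε ω • Y ω) : ℝ)]
  have hh3int : Integrable (fun ω => κ ω * ‖ε ω • Y ω‖^2) P := by
    refine Integrable.mono' (integrable_const (Cm * R^2))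
      (hκam.mul ((hεa.smul hYint.1).norm.pow 2)) ?_
    filter_upwards [hκCb, hεYb] with ω h1 h2
    rw [Real.norm_eq_abs, abs_mul]
    have h0 : 0 ≤ ‖ε ω • Y ω‖ := norm_nonneg _
    rw [abs_of_nonneg (by positivity : (0:ℝ) ≤ ‖ε ω • Y ω‖^2)]
    exact mul_le_mul h1 (pow_le_pow_left₀ h0 h2 2) (by positivity) hCm0
  have hκR2int : Integrable (fun ω => κ ω * R^2) P := by
    refine Integrable.mono' (integrable_const (Cm * R^2)) (hκam.mul_const _) ?_
    filter_upwards [hκCb] with ω h1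
    rw [Real.norm_eq_abs, abs_mul, abs_of_nonneg (by positivity : (0:ℝ) ≤ R^2)]
    nlinarith [sq_nonneg R]
  have hrhsint : Integrable (fun ω => Real.cosh (2*l*R) * Real.cosh (l*‖W ω‖)) P := by
    refine Integrable.mono' (integrable_const (Real.cosh (2*l*R) * Real.cosh (l*K)))
      (((Real.continuous_cosh.measurable.comp (hnm.const_mul l)).stronglyMeasurable.mono
        hm).aestronglyMeasurable.const_mul _) ?_
    filter_upwards [hWb] with ω h1
    rw [Real.norm_eq_abs, abs_of_nonneg (by positivity)]
    have : Real.cosh (l*‖W ω‖) ≤ Real.cosh (l*K) := by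
      apply aux_cosh_le
      rw [abs_mul, abs_of_nonneg hl.le, abs_of_nonneg (norm_nonneg _)]
      nlinarith [norm_nonneg (W ω)]
    nlinarith [Real.cosh_pos (2*l*R)]
  -- pointwise chord bound
  have hpt : ∀ᵐ ω ∂P, Real.cosh (l * ‖W ω + ε ω • Y ω‖) ≤
      β ω + (κ ω * (2 * (inner ℝ (W ω) (ε ω • Y ω) : ℝ)) + κ ω * ‖ε ω • Y ω‖^2) := by
    filter_upwards [hεYb] with ω hv
    set v : H := ε ω • Y ω with hvdef
    have hn0 : (0:ℝ) ≤ ‖W ω‖ := norm_nonneg _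
    have hnv0 : (0:ℝ) ≤ ‖v‖ := norm_nonneg _
    have hWv : ‖W ω + v‖ ≤ ‖W ω‖ + R := by
      have := norm_add_le (W ω) v; linarith
    by_cases hc : R ≤ ‖W ω‖
    · -- chord case
      have hlow : ‖W ω‖ - R ≤ ‖W ω + v‖ := by
        have h1 : ‖W ω‖ ≤ ‖W ω + v‖ + ‖v‖ := by
          calc ‖W ω‖ = ‖(W ω + v) + (-v)‖ := by rw [add_neg_cancel_right]
            _ ≤ ‖W ω + v‖ + ‖-v‖ := norm_add_le _ _
            _ = ‖W ω + v‖ + ‖v‖ := by rw [norm_neg]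
        linarith
      have hp0 : (0:ℝ) ≤ (‖W ω‖ - R)^2 := sq_nonneg _
      have hpu : (‖W ω‖ - R)^2 ≤ ‖W ω + v‖^2 := by
        apply pow_le_pow_left₀ (by linarith) hlow
      have huq : ‖W ω + v‖^2 ≤ (‖W ω‖ + R)^2 := by
        apply pow_le_pow_left₀ (norm_nonneg _) hWv
      have hpq : (‖W ω‖ - R)^2 < (‖W ω‖ + R)^2 := by nlinarith
      have hchord := aux_chord (aux_convexOn hl.le) hp0 hpu huq hpq
      rw [Real.sqrt_sq (norm_nonneg _), Real.sqrt_sq (by linarith),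
        Real.sqrt_sq (by positivity)] at hchord
      have hκω : κ ω = (Real.cosh (l*(‖W ω‖+R)) - Real.cosh (l*(‖W ω‖-R))) /
          ((‖W ω‖ + R)^2 - (‖W ω‖ - R)^2) := by
        rw [hκdef]
        simp only [if_pos hc]
        congr 1
        ring
      have hu : ‖W ω + v‖^2 = ‖W ω‖^2 + 2*(inner ℝ (W ω) v : ℝ) + ‖v‖^2 :=
        norm_add_sq_real _ _
      have hβω : β ω = Real.cosh (l*(‖W ω‖-R)) + κ ω * (‖W ω‖^2 - (‖W ω‖-R)^2) := by
        simp only [hβdef, if_pos hc]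
      have hsplit : κ ω * (‖W ω + v‖^2 - (‖W ω‖-R)^2)
          = κ ω * (‖W ω‖^2 - (‖W ω‖-R)^2) + (κ ω * (2*(inner ℝ (W ω) v : ℝ)) +
            κ ω * ‖v‖^2) := by
        rw [hu]; ring
      rw [hβω]
      rw [← hκω] at hchord
      linarith [hchord, hsplit.le, hsplit.ge]
    · -- monotone case
      have hβω : β ω = Real.cosh (l*‖W ω‖) * Real.cosh (2*l*R) := by
        simp only [hβdef, if_neg hc]
      have hκω : κ ω = 0 := by simp only [hκdef, if_neg hc]
      have h1 : Real.cosh (l * ‖W ω + v‖) ≤ Real.cosh (l*(‖W ω‖+R)) := by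
        apply aux_cosh_le
        rw [abs_mul, abs_of_nonneg hl.le, abs_of_nonneg (norm_nonneg _)]
        nlinarith
      have h2 : Real.cosh (l*(‖W ω‖+R)) ≤ Real.cosh (2*l*R) := by
        apply aux_cosh_le
        rw [abs_mul, abs_of_nonneg hl.le, abs_of_nonneg (by positivity)]
        push_neg at hc
        nlinarith
      have h3 : Real.cosh (2*l*R) ≤ Real.cosh (l*‖W ω‖) * Real.cosh (2*l*R) := by
        nlinarith [Real.one_le_cosh (l*‖W ω‖), Real.cosh_pos (2*l*R)]
      rw [hβω, hκω]
      simp only [zero_mul, add_zero]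
      linarith
  -- the orthogonality step
  have horth : ∫ ω, κ ω * (2 * (inner ℝ (W ω) (ε ω • Y ω) : ℝ)) ∂P = 0 := by
    have heq : (fun ω => κ ω * (2 * (inner ℝ (W ω) (ε ω • Y ω) : ℝ)))
        = fun ω => 2 * (inner ℝ ((κ ω * ε ω) • W ω) (Y ω) : ℝ) := by
      funext ω
      rw [real_inner_smul_right, real_inner_smul_left]
      ring
    rw [heq, integral_const_mul]
    have hG : StronglyMeasurable[m] (fun ω => (κ ω * ε ω) • W ω) :=
      ((hκm.mul hε.measurable).stronglyMeasurable).smul hW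
    have hGb : ∀ᵐ ω ∂P, ‖(κ ω * ε ω) • W ω‖ ≤ Cm * K := by
      filter_upwards [hκCb, hWb] with ω h1 h2
      rw [norm_smul, Real.norm_eq_abs, abs_mul]
      have hε1 : |ε ω| ≤ 1 := by rcases hε01 ω with h | h <;> simp [h]
      calc |κ ω| * |ε ω| * ‖W ω‖ ≤ (Cm * 1) * K := by
            exact mul_le_mul (mul_le_mul h1 hε1 (abs_nonneg _) hCm0) h2
              (norm_nonneg _) (by positivity)
        _ = Cm * K := by ring
    rw [aux_orth_s13 P hm hYint hmd hG hGb, mul_zero]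
  -- pointwise final bound
  have hfinal : ∀ ω, β ω + κ ω * R^2 ≤ Real.cosh (2*l*R) * Real.cosh (l*‖W ω‖) := by
    intro ω
    have hn0 : (0:ℝ) ≤ ‖W ω‖ := norm_nonneg _
    by_cases hc : R ≤ ‖W ω‖
    · have hκω : κ ω = (Real.cosh (l*(‖W ω‖+R)) - Real.cosh (l*(‖W ω‖-R)))/(4*‖W ω‖*R) := by
        simp only [hκdef, if_pos hc]
      have hβω : β ω = Real.cosh (l*(‖W ω‖-R)) + κ ω * (‖W ω‖^2 - (‖W ω‖-R)^2) := by
        simp only [hβdef, if_pos hc]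
      have h4a : (4*‖W ω‖*R) ≠ 0 := ne_of_gt (by nlinarith [norm_nonneg (W ω)])
      have hcomb : κ ω * ((‖W ω‖^2 - (‖W ω‖-R)^2) + R^2)
          = (Real.cosh (l*(‖W ω‖+R)) - Real.cosh (l*(‖W ω‖-R)))/2 := by
        rw [hκω]
        have hWne : ‖W ω‖ ≠ 0 := (hRpos.trans_le hc).ne'
        field_simp
        ring
      have hid : Real.cosh (l*(‖W ω‖+R)) + Real.cosh (l*(‖W ω‖-R))
          = 2 * Real.cosh (l*‖W ω‖) * Real.cosh (l*R) := by
        rw [show l*(‖W ω‖+R) = l*‖W ω‖ + l*R by ring,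
          show l*(‖W ω‖-R) = l*‖W ω‖ - l*R by ring,
          Real.cosh_add, Real.cosh_sub]
        ring
      have hmono : Real.cosh (l*R) ≤ Real.cosh (2*l*R) := by
        apply aux_cosh_le
        rw [abs_mul, abs_of_nonneg hl.le, abs_of_nonneg hRpos.le]
        nlinarith
      have hch : (0:ℝ) ≤ Real.cosh (l*‖W ω‖) := (Real.cosh_pos _).le
      have hstep : β ω + κ ω * R^2
          = Real.cosh (l*‖W ω‖) * Real.cosh (l*R) := by
        rw [hβω]
        have : Real.cosh (l*(‖W ω‖-R)) + κ ω * ((‖W ω‖^2 - (‖W ω‖-R)^2) + R^2)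
            = Real.cosh (l*‖W ω‖) * Real.cosh (l*R) := by
          rw [hcomb]; linarith [hid]
        linarith [this, (by ring : κ ω * ((‖W ω‖^2 - (‖W ω‖-R)^2) + R^2)
          = κ ω * (‖W ω‖^2 - (‖W ω‖-R)^2) + κ ω * R^2)]
      rw [hstep]
      nlinarith
    · have hκω : κ ω = 0 := by simp only [hκdef, if_neg hc]
      have hβω : β ω = Real.cosh (l*‖W ω‖) * Real.cosh (2*l*R) := by
        simp only [hβdef, if_neg hc]
      rw [hκω, hβω]
      ring_nf
      exact le_rfl
  -- assemble
  calc ∫ ω, Real.cosh (l * ‖W ω + ε ω • Y ω‖) ∂P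
      ≤ ∫ ω, (β ω + (κ ω * (2 * (inner ℝ (W ω) (ε ω • Y ω) : ℝ)) + κ ω * ‖ε ω • Y ω‖^2)) ∂P :=
        integral_mono_ae hf1int (hβint.add (hh2int.add hh3int)) hpt
    _ = ∫ ω, β ω ∂P + (∫ ω, κ ω * (2 * (inner ℝ (W ω) (ε ω • Y ω) : ℝ)) ∂P
          + ∫ ω, κ ω * ‖ε ω • Y ω‖^2 ∂P) := by
        have e1 := integral_add hβint (hh2int.add hh3int)
        have e2 := integral_add hh2int hh3int
        simp only [Pi.add_apply] at e1 e2
        rw [e1, e2]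
    _ = ∫ ω, β ω ∂P + ∫ ω, κ ω * ‖ε ω • Y ω‖^2 ∂P := by rw [horth, zero_add]
    _ ≤ ∫ ω, β ω ∂P + ∫ ω, κ ω * R^2 ∂P := by
        gcongr (∫ ω, β ω ∂P) + ?_
        refine integral_mono_ae hh3int hκR2int ?_
        filter_upwards [hεYb] with ω h1
        exact mul_le_mul_of_nonneg_left
          (pow_le_pow_left₀ (norm_nonneg _) h1 2) (hκ0 ω)
    _ = ∫ ω, (β ω + κ ω * R^2) ∂P := by
        have e3 := integral_add hβint hκR2int
        rw [e3]
    _ ≤ ∫ ω, Real.cosh (2*l*R) * Real.cosh (l*‖W ω‖) ∂P :=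
        integral_mono (hβint.add hκR2int) hrhsint hfinal
    _ = Real.cosh (2*l*R) * ∫ ω, Real.cosh (l*‖W ω‖) ∂P := integral_const_mul _ _

end step



set_option maxHeartbeats 2000000 in
/-- High-probability maximal bound for bounded martingale difference sequences
in a Hilbert space (Lemma 2.4 of Liu et al. 2023). -/
theorem mds_high_probability_maximal_bound
    {H : Type*} [NormedAddCommGroup H] [InnerProductSpace ℝ H] [CompleteSpace H]
    {Ω : Type*} {m0 : MeasurableSpace Ω}
    (P : Measure Ω) [IsProbabilityMeasure P]
    (ℱ : Filtration ℕ m0) (T : ℕ)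
    (X : ℕ → Ω → H) (R : ℕ → ℝ) (hR : ∀ t, 0 ≤ R t)
    (hadapt : ∀ t ∈ Finset.Icc 1 T, StronglyMeasurable[ℱ t] (X t))
    (hint : ∀ t ∈ Finset.Icc 1 T, Integrable (X t) P)
    (hmd : ∀ t ∈ Finset.Icc 1 T, P[X t | ℱ (t-1)] =ᵐ[P] 0)
    (hbdd : ∀ t ∈ Finset.Icc 1 T, ∀ᵐ ω ∂P, ‖X t ω‖ ≤ R t)
    (δ : ℝ) (hδ : δ ∈ Set.Ioo (0:ℝ) 1) :
    ENNReal.ofReal (1 - δ) ≤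
      P {ω | ∀ t ∈ Finset.Icc 1 T,
        ‖∑ s ∈ Finset.Icc 1 t, X s ω‖ ≤
          4 * Real.sqrt (Real.log (2/δ) * ∑ s ∈ Finset.Icc 1 T, (R s)^2)} := by
  classical
  obtain ⟨hδ0, hδ1⟩ := hδ
  set L : ℝ := Real.log (2/δ) with hLdef
  set V : ℝ := ∑ s ∈ Finset.Icc 1 T, (R s)^2 with hVdef
  set B : ℝ := 4 * Real.sqrt (L * V) with hBdef
  have hLpos : 0 < L := Real.log_pos (by rw [lt_div_iff₀ hδ0]; linarith)
  have hV0 : 0 ≤ V := Finset.sum_nonneg (fun s _ => sq_nonneg _)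
  have hB0 : 0 ≤ B := by positivity
  by_cases hVzero : V = 0
  · -- degenerate case
    have hae : ∀ᵐ ω ∂P, ∀ t ∈ Finset.Icc 1 T, X t ω = 0 := by
      rw [show (∀ᵐ ω ∂P, ∀ t ∈ Finset.Icc 1 T, X t ω = 0)
        = ∀ᵐ ω ∂P, ∀ t ∈ (Finset.Icc 1 T : Set ℕ), X t ω = 0 from rfl] at *
      rw [ae_ball_iff (Finset.Icc 1 T : Finset ℕ).countable_toSet]
      intro t ht
      have hRt : R t = 0 := by
        have h2 := (Finset.sum_eq_zero_iff_of_nonneg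
          (fun s _ => sq_nonneg (R s))).1 (hVdef.symm.trans hVzero) t ht
        exact pow_eq_zero_iff (by norm_num) |>.1 h2
      filter_upwards [hbdd t ht] with ω hb
      rw [hRt] at hb
      exact norm_le_zero_iff.1 hb
    have hsub : ∀ᵐ ω ∂P, ω ∈ {ω | ∀ t ∈ Finset.Icc 1 T,
        ‖∑ s ∈ Finset.Icc 1 t, X s ω‖ ≤ B} := by
      filter_upwards [hae] with ω h
      intro t ht
      have : ∑ s ∈ Finset.Icc 1 t, X s ω = 0 := by
        apply Finset.sum_eq_zero
        intro s hs
        rw [Finset.mem_Icc] at hs ht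
        exact h s (Finset.mem_Icc.2 ⟨hs.1, le_trans hs.2 ht.2⟩)
      rw [this, norm_zero]
      exact hB0
    calc ENNReal.ofReal (1-δ) ≤ 1 := ENNReal.ofReal_le_one.2 (by linarith)
      _ = P Set.univ := measure_univ.symm
      _ ≤ P {ω | ∀ t ∈ Finset.Icc 1 T, ‖∑ s ∈ Finset.Icc 1 t, X s ω‖ ≤ B}
          + P {ω | ∀ t ∈ Finset.Icc 1 T, ‖∑ s ∈ Finset.Icc 1 t, X s ω‖ ≤ B}ᶜ := by
          rw [← Set.union_compl_self {ω | ∀ t ∈ Finset.Icc 1 T,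
            ‖∑ s ∈ Finset.Icc 1 t, X s ω‖ ≤ B}]
          exact measure_union_le _ _
      _ = P {ω | ∀ t ∈ Finset.Icc 1 T, ‖∑ s ∈ Finset.Icc 1 t, X s ω‖ ≤ B} := by
          rw [show P {ω | ∀ t ∈ Finset.Icc 1 T, ‖∑ s ∈ Finset.Icc 1 t, X s ω‖ ≤ B}ᶜ = 0
            from hsub, add_zero]
  · -- main case
    have hVpos : 0 < V := lt_of_le_of_ne hV0 (Ne.symm hVzero)
    have hLV : 0 < L * V := mul_pos hLpos hVpos
    have hBpos : 0 < B := by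
      rw [hBdef]
      have := Real.sqrt_pos.2 hLV
      linarith
    set l : ℝ := B / (4*V) with hldef
    have hlpos : 0 < l := div_pos hBpos (by linarith)
    set K : ℝ := ∑ s ∈ Finset.Icc 1 T, R s with hKdef
    have hK0 : 0 ≤ K := Finset.sum_nonneg (fun s _ => hR s)
    -- the stopped process
    set Z : ℕ → Ω → H := fun n => Nat.rec (motive := fun _ => Ω → H) (fun _ => 0)
      (fun t Zt ω => Zt ω +
        (if t+1 ≤ T ∧ ‖Zt ω‖ ≤ B then (1:ℝ) else 0) • X (t+1) ω) n with hZdef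
    have hZsucc : ∀ t ω, Z (t+1) ω = Z t ω +
        (if t+1 ≤ T ∧ ‖Z t ω‖ ≤ B then (1:ℝ) else 0) • X (t+1) ω := fun t ω => rfl
    have hZ0 : ∀ ω, Z 0 ω = 0 := fun ω => rfl
    -- measurability
    have hZmeas : ∀ t, StronglyMeasurable[ℱ t] (Z t) := by
      intro t
      induction t with
      | zero => exact stronglyMeasurable_const
      | succ t ih =>
        by_cases hT : t+1 ≤ T
        · have heq : Z (t+1) = fun ω => Z t ω +
              (if ‖Z t ω‖ ≤ B then (1:ℝ) else 0) • X (t+1) ω := by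
            funext ω
            rw [hZsucc]
            congr 1
            by_cases hc : ‖Z t ω‖ ≤ B
            · rw [if_pos ⟨hT, hc⟩, if_pos hc]
            · rw [if_neg (fun hcon => hc hcon.2), if_neg hc]
          rw [heq]
          have hindm : Measurable[ℱ t] (fun ω => if ‖Z t ω‖ ≤ B then (1:ℝ) else 0) :=
            Measurable.ite (measurableSet_le ih.norm.measurable measurable_const)
              measurable_const measurable_const
          exact ((ih.mono (ℱ.mono (Nat.le_succ t))).add
            (((hindm.stronglyMeasurable).mono (ℱ.mono (Nat.le_succ t))).smul
              (hadapt (t+1) (Finset.mem_Icc.2 ⟨Nat.succ_le_succ (Nat.zero_le t), hT⟩))))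
        · have heq : Z (t+1) = Z t := by
            funext ω
            rw [hZsucc, if_neg (fun hcon => hT hcon.1), zero_smul, add_zero]
          rw [heq]
          exact ih.mono (ℱ.mono (Nat.le_succ t))
    -- a.e. bound
    have hZb : ∀ t, t ≤ T → ∀ᵐ ω ∂P, ‖Z t ω‖ ≤ ∑ s ∈ Finset.Icc 1 t, R s := by
      intro t
      induction t with
      | zero =>
        intro _
        filter_upwards with ω
        simp [hZ0 ω]
      | succ t ih =>
        intro hT
        have htT : t ≤ T := Nat.le_of_succ_le hT
        filter_upwards [ih htT, hbdd (t+1)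
          (Finset.mem_Icc.2 ⟨Nat.succ_le_succ (Nat.zero_le t), hT⟩)] with ω h1 h2
        rw [hZsucc]
        rw [Finset.sum_Icc_succ_top (Nat.succ_le_succ (Nat.zero_le t))]
        calc ‖Z t ω + (if t+1 ≤ T ∧ ‖Z t ω‖ ≤ B then (1:ℝ) else 0) • X (t+1) ω‖
            ≤ ‖Z t ω‖ + ‖(if t+1 ≤ T ∧ ‖Z t ω‖ ≤ B then (1:ℝ) else 0) • X (t+1) ω‖ :=
              norm_add_le _ _
          _ ≤ (∑ s ∈ Finset.Icc 1 t, R s) + R (t+1) := by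
              have : ‖(if t+1 ≤ T ∧ ‖Z t ω‖ ≤ B then (1:ℝ) else 0) • X (t+1) ω‖ ≤ R (t+1) := by
                split_ifs with hc
                · rw [one_smul]; exact h2
                · rw [zero_smul, norm_zero]; exact hR _
              linarith
    have hZK : ∀ t, t ≤ T → ∀ᵐ ω ∂P, ‖Z t ω‖ ≤ K := by
      intro t ht
      filter_upwards [hZb t ht] with ω h1
      refine le_trans h1 ?_
      rw [hKdef]
      apply Finset.sum_le_sum_of_subset_of_nonneg
      · exact Finset.Icc_subset_Icc le_rfl ht
      · intro s _ _; exact hR s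
    -- the exponential moment bound
    have hEcosh : ∀ t, t ≤ T →
        ∫ ω, Real.cosh (l * ‖Z t ω‖) ∂P ≤ ∏ s ∈ Finset.Icc 1 t, Real.cosh (2*l*R s) := by
      intro t
      induction t with
      | zero =>
        intro _
        have : (fun ω => Real.cosh (l * ‖Z 0 ω‖)) = fun _ => (1:ℝ) := by
          funext ω; rw [hZ0 ω]; simp
        rw [this]
        simp
      | succ t ih =>
        intro hT
        have htT : t ≤ T := Nat.le_of_succ_le hT
        have ihv := ih htT
        have hprodsplit : ∏ s ∈ Finset.Icc 1 (t+1), Real.cosh (2*l*R s)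
            = (∏ s ∈ Finset.Icc 1 t, Real.cosh (2*l*R s)) * Real.cosh (2*l*R (t+1)) :=
          Finset.prod_Icc_succ_top (Nat.succ_le_succ (Nat.zero_le t)) _
        have hprod0 : (0:ℝ) ≤ ∏ s ∈ Finset.Icc 1 t, Real.cosh (2*l*R s) :=
          Finset.prod_nonneg (fun s _ => (Real.cosh_pos _).le)
        by_cases hR0 : R (t+1) = 0
        · have hXz : ∀ᵐ ω ∂P, X (t+1) ω = 0 := by
            filter_upwards [hbdd (t+1)
              (Finset.mem_Icc.2 ⟨Nat.succ_le_succ (Nat.zero_le t), hT⟩)] with ω hb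
            rw [hR0] at hb
            exact norm_le_zero_iff.1 hb
          have hcongr : (fun ω => Real.cosh (l * ‖Z (t+1) ω‖))
              =ᵐ[P] (fun ω => Real.cosh (l * ‖Z t ω‖)) := by
            filter_upwards [hXz] with ω h
            rw [hZsucc, h, smul_zero, add_zero]
          rw [integral_congr_ae hcongr, hprodsplit, hR0]
          simp only [mul_zero, Real.cosh_zero, mul_one]
          exact ihv
        · have hRpos : 0 < R (t+1) := lt_of_le_of_ne (hR _) (Ne.symm hR0)
          set εf : Ω → ℝ := fun ω => if ‖Z t ω‖ ≤ B then (1:ℝ) else 0 with hεdef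
          have hZs : (fun ω => Real.cosh (l * ‖Z (t+1) ω‖))
              = fun ω => Real.cosh (l * ‖Z t ω + εf ω • X (t+1) ω‖) := by
            funext ω
            rw [hZsucc]
            congr 2
            by_cases hc : ‖Z t ω‖ ≤ B
            · rw [if_pos ⟨hT, hc⟩, hεdef]; simp only [if_pos hc]
            · rw [if_neg (fun hcon => hc hcon.2), hεdef]; simp only [if_neg hc]
          have hεm : StronglyMeasurable[ℱ t] εf := by
            rw [hεdef]
            exact (Measurable.ite (measurableSet_le (hZmeas t).norm.measurable
              measurable_const) measurable_const measurable_const).stronglyMeasurable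
          have hε01 : ∀ ω, εf ω = 0 ∨ εf ω = 1 := by
            intro ω
            rw [hεdef]
            by_cases hc : ‖Z t ω‖ ≤ B
            · right; simp only [if_pos hc]
            · left; simp only [if_neg hc]
          have hmdt : P[X (t+1) | ℱ t] =ᵐ[P] 0 := by
            have := hmd (t+1) (Finset.mem_Icc.2 ⟨Nat.succ_le_succ (Nat.zero_le t), hT⟩)
            simpa using this
          have hstep := aux_step P (ℱ.le t) (Z t) (X (t+1)) εf l (R (t+1)) K hlpos hRpos
            hK0 (hZmeas t) (hZK t htT) hεm hε01
            (hint (t+1) (Finset.mem_Icc.2 ⟨Nat.succ_le_succ (Nat.zero_le t), hT⟩))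
            (hbdd (t+1) (Finset.mem_Icc.2 ⟨Nat.succ_le_succ (Nat.zero_le t), hT⟩)) hmdt
          rw [hZs]
          calc ∫ ω, Real.cosh (l * ‖Z t ω + εf ω • X (t+1) ω‖) ∂P
              ≤ Real.cosh (2*l*R (t+1)) * ∫ ω, Real.cosh (l * ‖Z t ω‖) ∂P := hstep
            _ ≤ Real.cosh (2*l*R (t+1)) * ∏ s ∈ Finset.Icc 1 t, Real.cosh (2*l*R s) :=
                mul_le_mul_of_nonneg_left ihv (Real.cosh_pos _).le
            _ = ∏ s ∈ Finset.Icc 1 (t+1), Real.cosh (2*l*R s) := by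
                rw [hprodsplit]; ring
    -- deterministic claim
    have hdet : ∀ ω, ‖Z T ω‖ ≤ B → ∀ t ∈ Finset.Icc 1 T,
        ‖∑ s ∈ Finset.Icc 1 t, X s ω‖ ≤ B := by
      intro ω hZT
      have hfreeze : ∀ t, ¬(‖Z t ω‖ ≤ B) → ∀ u, Z (t+u) ω = Z t ω := by
        intro t hnot u
        induction u with
        | zero => rfl
        | succ u ihu =>
          have hcond : ¬(t+u+1 ≤ T ∧ ‖Z (t+u) ω‖ ≤ B) := by
            rw [ihu]
            exact fun hcon => hnot hcon.2
          show Z ((t+u)+1) ω = Z t ω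
          rw [hZsucc, if_neg hcond, zero_smul, add_zero, ihu]
      have hall : ∀ t, t ≤ T → ‖Z t ω‖ ≤ B := by
        intro t htT
        by_contra hnot
        have h1 := hfreeze t hnot (T - t)
        rw [Nat.add_sub_cancel' htT] at h1
        rw [h1] at hZT
        exact hnot hZT
      have heq : ∀ t, t ≤ T → Z t ω = ∑ s ∈ Finset.Icc 1 t, X s ω := by
        intro t
        induction t with
        | zero =>
          intro _
          rw [hZ0]
          rw [show Finset.Icc 1 0 = ∅ from Finset.Icc_eq_empty (by omega)]
          simp
        | succ t ih =>
          intro hT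
          have htT : t ≤ T := Nat.le_of_succ_le hT
          rw [hZsucc, if_pos ⟨hT, hall t htT⟩, one_smul, ih htT,
            Finset.sum_Icc_succ_top (Nat.succ_le_succ (Nat.zero_le t))]
      intro t ht
      rw [Finset.mem_Icc] at ht
      rw [← heq t ht.2]
      exact hall t ht.2
    -- Markov
    have hfm : AEStronglyMeasurable (fun ω => Real.cosh (l * ‖Z T ω‖)) P :=
      Real.continuous_cosh.comp_aestronglyMeasurable
        ((((hZmeas T).mono (ℱ.le T)).aestronglyMeasurable).norm.const_mul l)
    have hfint : Integrable (fun ω => Real.cosh (l * ‖Z T ω‖)) P := by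
      refine Integrable.mono' (integrable_const (Real.cosh (l*K))) hfm ?_
      filter_upwards [hZK T le_rfl] with ω h1
      rw [Real.norm_eq_abs, abs_of_nonneg (Real.cosh_pos _).le]
      apply aux_cosh_le
      rw [abs_mul, abs_of_nonneg hlpos.le, abs_of_nonneg (norm_nonneg _)]
      nlinarith [norm_nonneg (Z T ω)]
    have hmark := mul_meas_ge_le_integral_of_nonneg
      (ae_of_all P (fun ω => (Real.cosh_pos (l * ‖Z T ω‖)).le)) hfint (Real.cosh (l*B))
    -- numbers
    have hB2 : B^2 = 16*(L*V) := by
      rw [hBdef, mul_pow, Real.sq_sqrt hLV.le]; norm_num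
    have hlB : l*B = 4*L := by
      rw [hldef]
      rw [div_mul_eq_mul_div, show B*B = B^2 by ring, hB2]
      field_simp
      ring
    have hl2V : 2*l^2*V = 2*L := by
      rw [hldef]
      rw [div_pow, show B^2 = 16*(L*V) from hB2]
      field_simp
      ring
    have hexpL : Real.exp L = 2/δ := Real.exp_log (div_pos two_pos hδ0)
    have hEV : ∫ ω, Real.cosh (l * ‖Z T ω‖) ∂P ≤ (2/δ)^2 := by
      calc ∫ ω, Real.cosh (l * ‖Z T ω‖) ∂P
          ≤ ∏ s ∈ Finset.Icc 1 T, Real.cosh (2*l*R s) := hEcosh T le_rfl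
        _ ≤ ∏ s ∈ Finset.Icc 1 T, Real.exp ((2*l*R s)^2/2) := by
            apply Finset.prod_le_prod (fun s _ => (Real.cosh_pos _).le)
            intro s _
            exact aux_cosh_le_exp_half_sq _ (mul_nonneg (by positivity) (hR s))
        _ = Real.exp (∑ s ∈ Finset.Icc 1 T, (2*l*R s)^2/2) := (Real.exp_sum _ _).symm
        _ = Real.exp (2*l^2*V) := by
            congr 1
            rw [hVdef, Finset.mul_sum]
            apply Finset.sum_congr rfl
            intro s _
            ring
        _ = (2/δ)^2 := by
            rw [hl2V, show (2:ℝ)*L = L + L by ring, Real.exp_add, hexpL]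
            ring
    have hcoshB : (2/δ)^4/2 ≤ Real.cosh (l*B) := by
      have h0 := aux_exp_le_two_mul_cosh (l*B)
      have he : Real.exp (l*B) = (2/δ)^4 := by
        rw [hlB, show (4:ℝ)*L = L+L+(L+L) by ring, Real.exp_add, Real.exp_add, hexpL]
        ring
      rw [he] at h0
      linarith
    have hδ4 : (0:ℝ) < (2/δ)^4/2 := by positivity
    have htoReal : (P {ω | Real.cosh (l*B) ≤ Real.cosh (l * ‖Z T ω‖)}).toReal ≤ δ := by
      have hcoshBpos : 0 < Real.cosh (l*B) := Real.cosh_pos _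
      have h1 : Real.cosh (l*B) * (P {ω | Real.cosh (l*B)
          ≤ Real.cosh (l * ‖Z T ω‖)}).toReal ≤ (2/δ)^2 := le_trans hmark hEV
      have h2 : (P {ω | Real.cosh (l*B) ≤ Real.cosh (l * ‖Z T ω‖)}).toReal
          ≤ (2/δ)^2 / Real.cosh (l*B) := by
        rw [le_div_iff₀ hcoshBpos]; linarith [h1]
      refine le_trans h2 ?_
      have h3 : (2/δ)^2 / Real.cosh (l*B) ≤ (2/δ)^2 / ((2/δ)^4/2) :=
        div_le_div_of_nonneg_left (by positivity) hδ4 hcoshB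
      refine le_trans h3 ?_
      have h5 : (2/δ)^2/((2/δ)^4/2) = δ^2/2 := by
        field_simp
      rw [h5]
      nlinarith
    -- conclude
    set E : Set Ω := {ω | B < ‖Z T ω‖} with hEdef
    have hmeasE : MeasurableSet E :=
      measurableSet_lt measurable_const ((hZmeas T).mono (ℱ.le T)).norm.measurable
    have hPE : P E ≤ ENNReal.ofReal δ := by
      have hsub2 : E ⊆ {ω | Real.cosh (l*B) ≤ Real.cosh (l * ‖Z T ω‖)} := by
        intro ω hω
        rw [hEdef] at hω
        simp only [Set.mem_setOf_eq] at *
        apply aux_cosh_le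
        rw [abs_mul, abs_of_nonneg hlpos.le, abs_of_nonneg hB0]
        nlinarith [hω, hlpos]
      calc P E ≤ P {ω | Real.cosh (l*B) ≤ Real.cosh (l * ‖Z T ω‖)} := measure_mono hsub2
        _ = ENNReal.ofReal ((P {ω | Real.cosh (l*B) ≤ Real.cosh (l * ‖Z T ω‖)}).toReal) :=
            (ENNReal.ofReal_toReal (measure_ne_top P _)).symm
        _ ≤ ENNReal.ofReal δ := ENNReal.ofReal_le_ofReal htoReal
    have hcompl : Eᶜ = {ω | ‖Z T ω‖ ≤ B} := by
      ext ω
      simp [hEdef, not_lt]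
    calc ENNReal.ofReal (1-δ) = 1 - ENNReal.ofReal δ := by
          rw [ENNReal.ofReal_sub _ hδ0.le, ENNReal.ofReal_one]
      _ ≤ 1 - P E := tsub_le_tsub_left hPE 1
      _ = P Eᶜ := (prob_compl_eq_one_sub hmeasE).symm
      _ = P {ω | ‖Z T ω‖ ≤ B} := by rw [hcompl]
      _ ≤ P {ω | ∀ t ∈ Finset.Icc 1 T, ‖∑ s ∈ Finset.Icc 1 t, X s ω‖ ≤ B} :=
          measure_mono (fun ω h => hdet ω h)
end
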